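/- arXiv:2511.11365 — 7 statements merged into one kernel-verified Lean document; each statement's English description precedes it below -/
import Mathlib

section
/- A strict preference order (vote) v over a candidate set C partitioned into parties P_1, ..., P_m is party-aligned single-peaked with party axis P_1 < P_2 < ... < P_m if and only if the following three conditions hold, where for each party P_i we let h_i and l_i denote v's most- and least-preferred candidate within P_i, and P_j is the party containing v's top-ranked candidate: (a) if j is neither 1 nor m, then v prefers l_j to h_{j-1} or v prefers l_j to h_{j+1}; (b) for each i with j < i < m, v prefers l_i to h_{i+1}; (c) for each i with 1 < i < j, v prefers l_i to h_{i-1}. -/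
/-- The vote `succ` is single-peaked with respect to the axis `lt`:
for all `a ◁ b ◁ c`, if `a ≻ b` then `b ≻ c`. -/
def SinglePeakedWith {C : Type*} (succ lt : C → C → Prop) : Prop :=
  ∀ a b c : C, lt a b → lt b c → succ a b → succ b c

/-- Party-aligned single-peakedness of a single vote, where parties are indexed by
naturals and the party axis is the natural order of the indices: there is a
perceived candidate axis, compatible with the party axis, with respect to which
the vote is single-peaked. -/
def PASPVote {C : Type*} (party : C → ℕ) (succ : C → C → Prop) : Prop :=
  ∃ lt : C → C → Prop, IsStrictTotalOrder C lt ∧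
    (∀ c c' : C, lt c c' → party c ≤ party c') ∧
    SinglePeakedWith succ lt


/-!
On an axis compatible with the parties, candidates of parties `P_a < P_c < P_b` appear in this
order, so single-peakedness forbids `c` to be beaten by both of them. Taking for `a` or `b` the
peak gives (b) and (c); taking the best candidates of the neighbouring parties gives (a).

Conversely, order the parties along the party axis and, inside each party, list first the
candidates sent to the left of the peak, with increasing preference, then the others, with
decreasing preference. Since `h_i ⪰ l_i`, conditions (a)–(c) chain into `l_i ≻ h_k` for parties
`i < k` right of the peak and `l_k ≻ h_i` for parties `i < k` left of it, which is what
single-peakedness along this axis requires.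
-/

open Function Finset

section

variable {α C : Type*}

section Chain

variable {r : α → α → Prop} [IsTrans α r] [Std.Trichotomous r] {x y : ℕ → α} {a b : ℕ}

theorem rel_of_forall_rel_succ (hstep : ∀ n, a ≤ n → n < b → r (x n) (y (n + 1)))
    (hyx : ∀ n, a < n → n < b → ¬ r (x n) (y n)) (hab : a < b) : r (x a) (y b) := by
  induction b, hab using Nat.le_induction with
  | base => exact hstep a le_rfl (Nat.lt_add_one a)
  | succ k hk ih =>
    have hxk : r (x a) (x k) :=
      trans_trichotomous_right (ih (fun n h₁ h₂ => hstep n h₁ (by omega))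
        (fun n h₁ h₂ => hyx n h₁ (by omega))) (hyx k hk (by omega))
    exact trans_of r hxk (hstep k (by omega) (by omega))

theorem rel_of_forall_rel_pred (hstep : ∀ n, a ≤ n → n < b → r (x (n + 1)) (y n))
    (hyx : ∀ n, a < n → n < b → ¬ r (x n) (y n)) (hab : a < b) : r (x b) (y a) :=
  rel_of_forall_rel_succ (r := swap r) (x := y) (y := x) hstep hyx hab

end Chain

theorem isStrictTotalOrder_lex_comp {β : Type*} [LinearOrder β] (f : C → β)
    (r : C → C → Prop) [IsStrictTotalOrder C r] :
    IsStrictTotalOrder C (fun a b => f a < f b ∨ f a = f b ∧ r a b) where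
  trichotomous a b hab hba := by
    push Not at hab hba
    rcases trichotomous_of r a b with h | h | h
    · grind
    · exact h
    · grind
  irrefl a := by simp [irrefl_of r a]
  trans a b c := by
    rintro (hab | ⟨hab, rab⟩) (hbc | ⟨hbc, rbc⟩)
    · exact .inl (hab.trans hbc)
    · exact .inl (hbc ▸ hab)
    · exact .inl (hab ▸ hbc)
    · exact .inr ⟨hab.trans hbc, trans_of r rab rbc⟩

def splitAxis (succ : C → C → Prop) (L : C → Prop) (a b : C) : Prop :=
  L a ∧ ¬ L b ∨ L a ∧ L b ∧ succ b a ∨ ¬ L a ∧ ¬ L b ∧ succ a b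

theorem isStrictTotalOrder_splitAxis (succ : C → C → Prop) [IsStrictTotalOrder C succ]
    (L : C → Prop) : IsStrictTotalOrder C (splitAxis succ L) where
  trichotomous a b hab hba := by
    unfold splitAxis at hab hba
    rcases trichotomous_of succ a b with h | h | h <;> tauto
  irrefl a := by simp [splitAxis, irrefl_of succ a]
  trans a b c := by
    have hcba : succ c b → succ b a → succ c a := trans_of succ
    have habc : succ a b → succ b c → succ a c := trans_of succ
    unfold splitAxis
    tauto

theorem singlePeakedWith_iff {succ lt : C → C → Prop} [IsStrictTotalOrder C succ]
    [IsStrictTotalOrder C lt] {top : C} (htop : ∀ c, c ≠ top → succ top c) :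
    SinglePeakedWith succ lt ↔
      (∀ a b, lt a b → lt b top → succ b a) ∧ (∀ a b, lt a b → lt top a → succ a b) := by
  constructor
  · intro hsp
    refine ⟨fun a b hab hbt => ?_,
      fun a b hab hta => hsp top a b hta hab (htop a (ne_of_irrefl' hta))⟩
    rcases trichotomous_of succ a b with hab' | rfl | hba
    · exact absurd (hsp a b top hab hbt hab') (asymm (htop b (ne_of_irrefl hbt)))
    · exact absurd hab (irrefl_of lt a)
    · exact hba
  · rintro ⟨hleft, hright⟩ a b c hab hbc hsucc
    rcases trichotomous_of lt b top with hbt | rfl | htb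
    · exact absurd hsucc (asymm (hleft a b hab hbt))
    · exact htop c (ne_of_irrefl' hbc)
    · exact hright b c hbc htb

theorem PASPVote.succ_or_succ_of_party_lt_of_party_lt {party : C → ℕ}
    {succ : C → C → Prop} [IsStrictTotalOrder C succ] (hP : PASPVote party succ) {a b c : C}
    (hac : party a < party c) (hcb : party c < party b) : succ c a ∨ succ c b := by
  obtain ⟨lt, hlt, hcompat, hsp⟩ := hP
  have lt_of_party_lt {x y : C} (hxy : party x < party y) : lt x y := by
    rcases trichotomous_of lt x y with h | rfl | h
    · exact h
    · omega
    · exact absurd (hcompat y x h) (by omega)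
  rcases trichotomous_of succ a c with hac' | rfl | hca
  · exact .inr (hsp a c b (lt_of_party_lt hac) (lt_of_party_lt hcb) hac')
  · omega
  · exact .inl hca

theorem PASPVote.succ_of_peak_lt_party_lt {party : C → ℕ} {succ : C → C → Prop}
    [IsStrictTotalOrder C succ] (hP : PASPVote party succ) {top : C}
    (htop : ∀ c, c ≠ top → succ top c) {b c : C} (htc : party top < party c)
    (hcb : party c < party b) : succ c b :=
  (hP.succ_or_succ_of_party_lt_of_party_lt htc hcb).resolve_left
    (asymm (htop c (by rintro rfl; omega)))

theorem PASPVote.succ_of_party_lt_peak_lt {party : C → ℕ} {succ : C → C → Prop}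
    [IsStrictTotalOrder C succ] (hP : PASPVote party succ) {top : C}
    (htop : ∀ c, c ≠ top → succ top c) {a c : C} (hac : party a < party c)
    (hct : party c < party top) : succ c a :=
  (hP.succ_or_succ_of_party_lt_of_party_lt hac hct).resolve_right
    (asymm (htop c (by rintro rfl; omega)))

theorem paspVote_of_split {party : C → ℕ} {succ : C → C → Prop} [IsStrictTotalOrder C succ]
    {top : C} (htop : ∀ c, c ≠ top → succ top c) (L : C → Prop) (hLtop : ¬ L top)
    (hL_of_lt : ∀ c, party c < party top → L c) (hL_of_gt : ∀ c, party top < party c → ¬ L c)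
    (hleft : ∀ a b, party a < party b → L b → succ b a)
    (hright : ∀ a b, party a < party b → ¬ L a → succ a b) : PASPVote party succ := by
  have := isStrictTotalOrder_splitAxis succ L
  have hlex := isStrictTotalOrder_lex_comp party (splitAxis succ L)
  refine ⟨_, hlex, fun a b hab => hab.elim le_of_lt (·.1.le),
    (singlePeakedWith_iff htop).2 ⟨fun a b hab hbt => ?_, fun a b hab hta => ?_⟩⟩
  · have hb : L b := by
      rcases hbt with hbt | ⟨-, hbt⟩
      · exact hL_of_lt b hbt
      · by_contra hb
        have hbtop : succ b top := by unfold splitAxis at hbt; tauto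
        exact asymm hbtop (htop b (ne_of_irrefl hbtop))
    rcases hab with hab | ⟨-, hab⟩
    · exact hleft a b hab hb
    · unfold splitAxis at hab; tauto
  · have ha : ¬ L a := by
      rcases hta with hta | ⟨-, hta⟩
      · exact hL_of_gt a hta
      · unfold splitAxis at hta; tauto
    rcases hab with hab | ⟨-, hab⟩
    · exact hright a b hab ha
    · unfold splitAxis at hab; tauto

section Parties

variable {m : ℕ} {party : C → ℕ} {succ : C → C → Prop} [IsStrictTotalOrder C succ]
  {h l : ℕ → C} {top : C} {j : ℕ}

theorem paspVote_of_conditions (hpr : ∀ c : C, party c ∈ Icc 1 m)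
    (hh : ∀ i ∈ Icc 1 m, party (h i) = i ∧ ∀ c : C, party c = i → c ≠ h i → succ (h i) c)
    (hl : ∀ i ∈ Icc 1 m, party (l i) = i ∧ ∀ c : C, party c = i → c ≠ l i → succ c (l i))
    (htop : ∀ c : C, c ≠ top → succ top c) (hj : party top = j)
    (hA : 1 < j → j < m → succ (l j) (h (j - 1)) ∨ succ (l j) (h (j + 1)))
    (hB : ∀ i : ℕ, j < i → i < m → succ (l i) (h (i + 1)))
    (hC : ∀ i : ℕ, 1 < i → i < j → succ (l i) (h (i - 1))) :
    PASPVote party succ := by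
  have not_succ_h (c : C) : ¬ succ c (h (party c)) := fun hc =>
    asymm hc ((hh _ (hpr c)).2 c rfl (ne_of_irrefl hc))
  have not_l_succ (c : C) : ¬ succ (l (party c)) c := fun hc =>
    asymm hc ((hl _ (hpr c)).2 c rfl (ne_of_irrefl' hc))
  have not_l_succ_h {n : ℕ} (h₁ : 1 ≤ n) (h₂ : n ≤ m) : ¬ succ (l n) (h n) := by
    simpa only [(hl n (mem_Icc.2 ⟨h₁, h₂⟩)).1] using not_succ_h (l n)
  -- The non-top candidates of the peak's party go left of the peak exactly when `F` holds.
  let F := j = 1 ∨ succ (l j) (h (j - 1))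
  refine paspVote_of_split htop (fun c => c ≠ top ∧ (party c < j ∨ party c = j ∧ F)) (by simp)
    (fun c hc => ⟨by rintro rfl; omega, by omega⟩) (fun c hc hL => by omega) ?_ ?_
  · rintro a b hab ⟨-, hb⟩
    have hlh : succ (l (party b)) (h (party a)) := by
      refine rel_of_forall_rel_pred (fun n h₁ h₂ => ?_)
        (fun n h₁ h₂ => not_l_succ_h (by grind) (by grind)) hab
      rcases Nat.lt_or_ge (n + 1) j with hn | hn
      · exact hC (n + 1) (by grind) hn
      · have hF : F := (hb.resolve_left (by omega)).2
        obtain rfl : j = n + 1 := by omega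
        exact hF.resolve_left (by grind)
    exact trans_trichotomous_right (trans_trichotomous_left (not_l_succ b) hlh) (not_succ_h a)
  · intro a b hab ha
    rcases eq_or_ne a top with rfl | hat
    · exact htop b (by rintro rfl; omega)
    have hja : j ≤ party a := by_contra fun hlt => ha ⟨hat, .inl (by omega)⟩
    have hlh : succ (l (party a)) (h (party b)) := by
      refine rel_of_forall_rel_succ (fun n h₁ h₂ => ?_)
        (fun n h₁ h₂ => not_l_succ_h (by grind) (by grind)) hab
      rcases Nat.lt_or_ge j n with hn | hn
      · exact hB n hn (by grind)
      · obtain rfl : j = n := by grind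
        have hF : ¬ F := fun hF => ha ⟨hat, .inr ⟨by omega, hF⟩⟩
        exact (hA (by grind) (by grind)).resolve_left (by grind)
    exact trans_trichotomous_right (trans_trichotomous_left (not_l_succ a) hlh) (not_succ_h b)

end Parties

end

theorem vote_party_single_peaked_characterization_general
    {C : Type*} {m : ℕ}
    (party : C → ℕ) (hpr : ∀ c : C, party c ∈ Finset.Icc 1 m)
    (succ : C → C → Prop) (hsto : IsStrictTotalOrder C succ)
    (h l : ℕ → C)
    (hh : ∀ i ∈ Finset.Icc 1 m,
      party (h i) = i ∧ ∀ c : C, party c = i → c ≠ h i → succ (h i) c)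
    (hl : ∀ i ∈ Finset.Icc 1 m,
      party (l i) = i ∧ ∀ c : C, party c = i → c ≠ l i → succ c (l i))
    (top : C) (htop : ∀ c : C, c ≠ top → succ top c)
    (j : ℕ) (hj : party top = j) :
    PASPVote party succ ↔
      ((1 < j → j < m → succ (l j) (h (j - 1)) ∨ succ (l j) (h (j + 1))) ∧
       (∀ i : ℕ, j < i → i < m → succ (l i) (h (i + 1))) ∧
       (∀ i : ℕ, 1 < i → i < j → succ (l i) (h (i - 1)))) := by
  refine ⟨fun hP => ?_, fun ⟨hA, hB, hC⟩ => paspVote_of_conditions hpr hh hl htop hj hA hB hC⟩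
  refine ⟨fun h₁ h₂ => ?_, fun i h₁ h₂ => ?_, fun i h₁ h₂ => ?_⟩
  · exact hP.succ_or_succ_of_party_lt_of_party_lt (by grind) (by grind)
  · exact hP.succ_of_peak_lt_party_lt htop (by grind) (by grind)
  · exact hP.succ_of_party_lt_peak_lt htop (by grind) (by grind)

/-- Lemma 1 (characterization of party-aligned single-peakedness of a single vote
under a fixed party axis `P_1 < … < P_m`).  Here `h i` and `l i` are the most-
and least-preferred candidates of party `P_i`, `top` is the top candidate of the
vote and `j` its party. -/
theorem vote_party_single_peaked_characterization
    {C : Type*} [Fintype C] {m : ℕ} (hm : 1 ≤ m)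
    (party : C → ℕ) (hpr : ∀ c : C, party c ∈ Finset.Icc 1 m)
    (succ : C → C → Prop) (hsto : IsStrictTotalOrder C succ)
    (h l : ℕ → C)
    (hh : ∀ i ∈ Finset.Icc 1 m,
      party (h i) = i ∧ ∀ c : C, party c = i → c ≠ h i → succ (h i) c)
    (hl : ∀ i ∈ Finset.Icc 1 m,
      party (l i) = i ∧ ∀ c : C, party c = i → c ≠ l i → succ c (l i))
    (top : C) (htop : ∀ c : C, c ≠ top → succ top c)
    (j : ℕ) (hj : party top = j) :
    PASPVote party succ ↔
      ((1 < j → j < m → succ (l j) (h (j - 1)) ∨ succ (l j) (h (j + 1))) ∧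
       (∀ i : ℕ, j < i → i < m → succ (l i) (h (i + 1))) ∧
       (∀ i : ℕ, 1 < i → i < j → succ (l i) (h (i - 1)))) :=
  vote_party_single_peaked_characterization_general party hpr succ hsto h l hh hl top htop j hj
end

section
/- Suppose each vote in a profile Π over candidate set C has the candidates of parties P_1 ∪ ... ∪ P_i ∪ P_j ∪ ... ∪ P_m as a suffix (i.e., every candidate outside this union is preferred by every voter to every candidate in this union), and let Q be the set of candidates not in this suffix. If the restriction of Π to Q is party-aligned single-peaked with party axis Q_1 < ... < Q_k, and Π restricted to the suffix candidates is consistent with ordering parties P_1, ..., P_i on the left and P_j, ..., P_m on the right, then Π is party-aligned single-peaked with party axis P_1, ..., P_i, Q_1, ..., Q_k, P_j, ..., P_m. -/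
/-- Party-aligned single-peakedness of a vote restricted to a subset `Q` of the
candidates, with parties indexed by naturals (axis = order of indices). -/
def PASPVoteOn {C : Type*} (Q : Set C) (party : C → ℕ) (succ : C → C → Prop) : Prop :=
  ∃ lt : C → C → Prop,
    (∀ a ∈ Q, ¬ lt a a) ∧
    (∀ a ∈ Q, ∀ b ∈ Q, ∀ c ∈ Q, lt a b → lt b c → lt a c) ∧
    (∀ a ∈ Q, ∀ b ∈ Q, a ≠ b → lt a b ∨ lt b a) ∧
    (∀ a ∈ Q, ∀ b ∈ Q, lt a b → party a ≤ party b) ∧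
    (∀ a ∈ Q, ∀ b ∈ Q, ∀ c ∈ Q, lt a b → lt b c → succ a b → succ b c)

/-!
The new perceived axis of a voter is their old one with the block `Q` of middle candidates
reordered by their axis for the restricted profile. `Q` is an interval of the old axis, so
this splice is again a strict total order, and it is compatible with the new party axis. It
is single-peaked: a triple whose middle candidate lies outside `Q` is ordered as before, and
one whose middle candidate lies in `Q` is handled by the single-peakedness on `Q`, unless one
of its ends leaves `Q`, where the suffix property decides the preferences.
-/

section Splice

variable {C : Type*}

open Classical in
def spliceOn (Q : Set C) (r s : C → C → Prop) (a b : C) : Prop :=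
  if a ∈ Q ∧ b ∈ Q then r a b else s a b

variable {Q : Set C} {r s : C → C → Prop} {a b : C}

theorem spliceOn_of_mem (ha : a ∈ Q) (hb : b ∈ Q) : spliceOn Q r s a b ↔ r a b := by
  rw [spliceOn, if_pos ⟨ha, hb⟩]

theorem spliceOn_of_not_mem_left (ha : a ∉ Q) : spliceOn Q r s a b ↔ s a b := by
  rw [spliceOn, if_neg fun h => ha h.1]

theorem spliceOn_of_not_mem_right (hb : b ∉ Q) : spliceOn Q r s a b ↔ s a b := by
  rw [spliceOn, if_neg fun h => hb h.2]

theorem isStrictTotalOrder_spliceOn [IsStrictTotalOrder C s]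
    (hconvex : ∀ a b c, a ∈ Q → c ∈ Q → s a b → s b c → b ∈ Q)
    (hirr : ∀ a ∈ Q, ¬ r a a)
    (htrans : ∀ a ∈ Q, ∀ b ∈ Q, ∀ c ∈ Q, r a b → r b c → r a c)
    (htri : ∀ a ∈ Q, ∀ b ∈ Q, a ≠ b → r a b ∨ r b a) :
    IsStrictTotalOrder C (spliceOn Q r s) := by
  have total (a c : C) (hac : a ≠ c) : s a c ∨ s c a := by
    rcases trichotomous_of s a c with h | h | h
    exacts [Or.inl h, (hac h).elim, Or.inr h]
  refine { trichotomous := fun a b => ?_, irrefl := fun a => ?_, trans := fun a b c => ?_ }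
  · by_cases ha : a ∈ Q <;> by_cases hb : b ∈ Q
    · rw [spliceOn_of_mem ha hb, spliceOn_of_mem hb ha]
      intro hab hba
      by_contra hne
      exact (htri a ha b hb hne).elim hab hba
    all_goals
      simp only [spliceOn_of_not_mem_left, spliceOn_of_not_mem_right, ha, hb,
        not_false_eq_true]
      exact Std.Trichotomous.trichotomous a b
  · by_cases ha : a ∈ Q
    · rw [spliceOn_of_mem ha ha]; exact hirr a ha
    · rw [spliceOn_of_not_mem_left ha]; exact irrefl a
  · by_cases ha : a ∈ Q <;> by_cases hb : b ∈ Q <;> by_cases hc : c ∈ Q <;>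
      simp only [spliceOn_of_mem, spliceOn_of_not_mem_left, spliceOn_of_not_mem_right,
        ha, hb, hc, not_false_eq_true]
    · exact htrans a ha b hb c hc
    · exact fun _ hbc => (total a c (ne_of_mem_of_not_mem ha hc)).resolve_right
        fun hca => hc (hconvex b c a hb ha hbc hca)
    · exact fun hab hbc => absurd (hconvex a b c ha hc hab hbc) hb
    · exact _root_.trans
    · exact fun hab hbc => (total a c (fun h => ha (h ▸ hc))).resolve_right
        fun hca => ha (hconvex c a b hc hb hca hab)
    all_goals exact _root_.trans

theorem singlePeakedWith_spliceOn {succ : C → C → Prop} [Std.Asymm succ]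
    (hs : SinglePeakedWith succ s)
    (hr : ∀ a ∈ Q, ∀ b ∈ Q, ∀ c ∈ Q, r a b → r b c → succ a b → succ b c)
    (hsuffix : ∀ b ∈ Q, ∀ c ∉ Q, succ b c) :
    SinglePeakedWith succ (spliceOn Q r s) := by
  intro a b c hab hbc habs
  by_cases hb : b ∈ Q
  swap
  · exact hs a b c ((spliceOn_of_not_mem_right hb).1 hab) ((spliceOn_of_not_mem_left hb).1 hbc)
      habs
  by_cases hc : c ∈ Q
  swap
  · exact hsuffix b hb c hc
  by_cases ha : a ∈ Q
  · exact hr a ha b hb c hc ((spliceOn_of_mem ha hb).1 hab) ((spliceOn_of_mem hb hc).1 hbc) habs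
  · exact absurd (hsuffix b hb a ha) (asymm habs)

theorem Set.OrdConnected.mem_preimage_of_rel_of_rel {α : Type*} [Preorder α] {S : Set α}
    (hS : S.OrdConnected) {f : C → α} (hf : ∀ a b, s a b → f a ≤ f b) (a b c : C)
    (ha : a ∈ f ⁻¹' S) (hc : c ∈ f ⁻¹' S) (hab : s a b) (hbc : s b c) : b ∈ f ⁻¹' S :=
  hS.out ha hc ⟨hf a b hab, hf b c hbc⟩

theorem party_le_spliceOn {party : C → ℕ} {i j : ℕ} {π : ℕ → ℕ}
    (hπ : Set.MapsTo π (Set.Ioo i j) (Set.Ioo i j))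
    (hs : ∀ a b, s a b → party a ≤ party b)
    (hr : ∀ a ∈ party ⁻¹' Set.Ioo i j, ∀ b ∈ party ⁻¹' Set.Ioo i j,
      r a b → π (party a) ≤ π (party b))
    (a b : C) (hab : spliceOn (party ⁻¹' Set.Ioo i j) r s a b) :
    (if i < party a ∧ party a < j then π (party a) else party a) ≤
      (if i < party b ∧ party b < j then π (party b) else party b) := by
  set Q := party ⁻¹' Set.Ioo i j
  by_cases ha : i < party a ∧ party a < j <;> by_cases hb : i < party b ∧ party b < j
  · rw [if_pos ha, if_pos hb]
    exact hr a ha b hb ((spliceOn_of_mem (Q := Q) ha hb).1 hab)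
  · have hle := hs a b ((spliceOn_of_not_mem_right (Q := Q) hb).1 hab)
    have hπa : π (party a) ∈ Set.Ioo i j := hπ ha
    rw [if_pos ha, if_neg hb]
    grind
  · have hle := hs a b ((spliceOn_of_not_mem_left (Q := Q) ha).1 hab)
    have hπb : π (party b) ∈ Set.Ioo i j := hπ hb
    rw [if_neg ha, if_pos hb]
    grind
  · rw [if_neg ha, if_neg hb]
    exact hs a b ((spliceOn_of_not_mem_left (Q := Q) ha).1 hab)

end Splice

theorem reducing_problem_general
    {C V : Type*}
    (party : C → ℕ)
    (succ : V → C → C → Prop) (hsto : ∀ v : V, IsStrictTotalOrder C (succ v))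
    (hPASP : ∀ v : V, PASPVote party (succ v))
    (i j : ℕ)
    (hsuffix : ∀ (v : V) (c c' : C), (i < party c ∧ party c < j) →
      (party c' ≤ i ∨ j ≤ party c') → succ v c c')
    (π : ℕ → ℕ) (hπ : Set.BijOn π (Set.Ioo i j) (Set.Ioo i j))
    (hQ : ∀ v : V, PASPVoteOn {c : C | i < party c ∧ party c < j}
      (fun c => π (party c)) (succ v)) :
    ∀ v : V, PASPVote
      (fun c => if i < party c ∧ party c < j then π (party c) else party c)
      (succ v) := by
  intro v
  have := hsto v
  obtain ⟨lt, hlt, hlt_party, hlt_peaked⟩ := hPASP v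
  obtain ⟨ltQ, hirr, htrans, htri, hltQ_party, hltQ_peaked⟩ := hQ v
  refine ⟨spliceOn (party ⁻¹' Set.Ioo i j) ltQ lt, ?_, party_le_spliceOn hπ.mapsTo hlt_party
    hltQ_party, singlePeakedWith_spliceOn hlt_peaked hltQ_peaked fun b hb c hc => ?_⟩
  · exact isStrictTotalOrder_spliceOn
      (Set.ordConnected_Ioo.mem_preimage_of_rel_of_rel hlt_party) hirr htrans htri
  · exact hsuffix v b c hb (by grind)

/-- Lemma (reducing the problem): if the candidates of the extremal parties
`P_1,…,P_i, P_j,…,P_m` form a suffix of every vote of a party-aligned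
single-peaked profile, `Q` is the set of remaining (middle) candidates, and the
restriction of the profile to `Q` is party-aligned single-peaked with the middle
parties reordered by `π`, then the whole profile is party-aligned single-peaked
with the party axis `P_1,…,P_i, Q_1,…,Q_k, P_j,…,P_m` (middle parties reindexed
by `π`, extremal parties keeping their indices). -/
theorem reducing_problem
    {C V : Type*} [Fintype C] {m : ℕ}
    (party : C → ℕ) (hpr : ∀ c : C, party c ∈ Finset.Icc 1 m)
    (succ : V → C → C → Prop) (hsto : ∀ v : V, IsStrictTotalOrder C (succ v))
    (hPASP : ∀ v : V, PASPVote party (succ v))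
    (i j : ℕ) (hij : i < j) (hjm : j ≤ m + 1)
    (hsuffix : ∀ (v : V) (c c' : C), (i < party c ∧ party c < j) →
      (party c' ≤ i ∨ j ≤ party c') → succ v c c')
    (π : ℕ → ℕ) (hπ : Set.BijOn π (Set.Ioo i j) (Set.Ioo i j))
    (hQ : ∀ v : V, PASPVoteOn {c : C | i < party c ∧ party c < j}
      (fun c => π (party c)) (succ v)) :
    ∀ v : V, PASPVote
      (fun c => if i < party c ∧ party c < j then π (party c) else party c)
      (succ v) :=
  reducing_problem_general party succ hsto hPASP i j hsuffix π hπ hQ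
end

section
/- Suppose a voter's vote ≻_v is party-aligned single-peaked with party axis P_1 < ... < P_m. Then there exist two parties, adjacent along the party axis (or possibly a single party), such that in every reduced election arising from any nomination scheme (one nominee per party), the voter's most-preferred nominee belongs to one of these two parties. That is, each voter can vote for nominees of at most two, adjacent, parties across all nomination schemes. -/
/-- A nomination scheme: one nominee of party `i` for each `i ∈ {1,…,k}`. -/
def ValidNom {C : Type*} (party : C → ℕ) (k : ℕ) (nom : ℕ → C) : Prop :=
  ∀ i ∈ Finset.Icc 1 k, party (nom i) = i

/-- The set of voters whose favourite nominee is the nominee of party `i`. -/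
def votesFor {C V : Type*} (succ : V → C → C → Prop) (k : ℕ) (nom : ℕ → C)
    (i : ℕ) : Set V :=
  {v | ∀ i' ∈ Finset.Icc 1 k, i' ≠ i → succ v (nom i) (nom i')}

/-- Plurality score of party `i`'s nominee in the reduced election. -/
noncomputable def score {C V : Type*} (succ : V → C → C → Prop) (k : ℕ)
    (nom : ℕ → C) (i : ℕ) : ℕ :=
  (votesFor succ k nom i).ncard

/-- Party `i`'s nominee is a Plurality winner of the reduced election. -/
def IsWinner {C V : Type*} (succ : V → C → C → Prop) (k : ℕ) (nom : ℕ → C)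
    (i : ℕ) : Prop :=
  ∀ i' ∈ Finset.Icc 1 k, score succ k nom i' ≤ score succ k nom i

/-- `c'` is a Nash deviation by party `i` for the nomination scheme `nom`. -/
def NashDeviation {C V : Type*} (party : C → ℕ) (succ : V → C → C → Prop)
    (k : ℕ) (nom : ℕ → C) (i : ℕ) (c' : C) : Prop :=
  party c' = i ∧ c' ≠ nom i ∧ ¬ IsWinner succ k nom i ∧
    IsWinner succ k (Function.update nom i c') i

/-- A nomination scheme is a pure Nash equilibrium if no party has a Nash deviation. -/
def NashEq {C V : Type*} (party : C → ℕ) (succ : V → C → C → Prop) (k : ℕ)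
    (nom : ℕ → C) : Prop :=
  ∀ i ∈ Finset.Icc 1 k, ∀ c' : C, ¬ NashDeviation party succ k nom i c'


/-! Let `p` be the voter's top candidate and `t` its party. Preference decreases along the axis
away from `p`, so a nominee of a party below `t - 1` loses to the nominee of party `t - 1`, and one
above `t + 1` to the nominee of party `t + 1`: the vote goes to a party in `{t - 1, t, t + 1}`.
If some candidate `y` of party `t + 1` beats a candidate `x` of party `t` weakly left of `p`, then
every candidate `b` of party `t` beats every candidate `a` left of party `t`: either `b` lies left
of `p` and is closer to it than `a`, or `b ≻ y ≻ x ≻ a`. So the vote goes to `t` or `t + 1`.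
Otherwise a candidate of party `t + 1` loses to every candidate of party `t`, which lies either
weakly left of `p` or strictly between `p` and it; so the vote goes to `t - 1` or `t`. -/

open Finset

section SinglePeaked

variable {C : Type*} {succ lt : C → C → Prop}

theorem exists_forall_ne_succ [Finite C] [Nonempty C] [IsStrictTotalOrder C succ] :
    ∃ p : C, ∀ c, c ≠ p → succ p c := by
  obtain ⟨p, -, hp⟩ := (Finite.wellFounded_of_trans_of_irrefl succ).has_min
    Set.univ Set.univ_nonempty
  refine ⟨p, fun c hcp => ?_⟩
  rcases trichotomous_of succ p c with h | rfl | h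
  exacts [h, absurd rfl hcp, absurd h (hp c trivial)]

variable [IsStrictTotalOrder C lt] {p : C}

theorem SinglePeakedWith.succ_of_lt_of_not_peak_lt [IsStrictTotalOrder C succ]
    (hSP : SinglePeakedWith succ lt) (hp : ∀ c, c ≠ p → succ p c) {a b : C}
    (hab : lt a b) (hbp : ¬ lt p b) : succ b a := by
  rcases trichotomous_of lt b p with hbp' | rfl | hpb
  · rcases trichotomous_of succ b a with h | rfl | h
    · exact h
    · exact absurd hab (irrefl_of lt b)
    · exact absurd (hp b (ne_of_irrefl hbp')) (asymm_of succ (hSP a b p hab hbp' h))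
  · exact hp a (ne_of_irrefl hab)
  · exact absurd hpb hbp

theorem SinglePeakedWith.succ_of_lt_of_not_lt_peak
    (hSP : SinglePeakedWith succ lt) (hp : ∀ c, c ≠ p → succ p c) {b c : C}
    (hbc : lt b c) (hbp : ¬ lt b p) : succ b c := by
  rcases trichotomous_of lt b p with hbp' | rfl | hpb
  · exact absurd hbp' hbp
  · exact hp c (ne_of_irrefl hbc).symm
  · exact hSP p b c hpb hbc (hp b (ne_of_irrefl hpb).symm)

end SinglePeaked

section PartyAxis

variable {C : Type*} {succ lt : C → C → Prop} {party : C → ℕ}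

theorem not_lt_of_party_lt (hmono : ∀ c c', lt c c' → party c ≤ party c') {a b : C}
    (h : party a < party b) : ¬ lt b a :=
  fun hba => (hmono b a hba).not_gt h

theorem lt_of_party_lt [IsStrictTotalOrder C lt] (hmono : ∀ c c', lt c c' → party c ≤ party c')
    {a b : C} (h : party a < party b) : lt a b := by
  rcases trichotomous_of lt a b with hab | rfl | hba
  exacts [hab, absurd h (lt_irrefl _), absurd hba (not_lt_of_party_lt hmono h)]

variable [IsStrictTotalOrder C lt] {p : C}

theorem succ_of_party_lt_of_party_lt_peak [IsStrictTotalOrder C succ]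
    (hSP : SinglePeakedWith succ lt) (hp : ∀ c, c ≠ p → succ p c)
    (hmono : ∀ c c', lt c c' → party c ≤ party c') {a b : C}
    (hab : party a < party b) (hbp : party b < party p) : succ b a :=
  hSP.succ_of_lt_of_not_peak_lt hp (lt_of_party_lt hmono hab) (not_lt_of_party_lt hmono hbp)

theorem succ_of_peak_party_lt_of_party_lt (hSP : SinglePeakedWith succ lt)
    (hp : ∀ c, c ≠ p → succ p c) (hmono : ∀ c c', lt c c' → party c ≤ party c') {a b : C}
    (hpb : party p < party b) (hba : party b < party a) : succ b a :=
  hSP.succ_of_lt_of_not_lt_peak hp (lt_of_party_lt hmono hba) (not_lt_of_party_lt hmono hpb)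

theorem succ_of_party_lt_peak_of_succ [IsStrictTotalOrder C succ]
    (hSP : SinglePeakedWith succ lt) (hp : ∀ c, c ≠ p → succ p c)
    (hmono : ∀ c c', lt c c' → party c ≤ party c') {x y : C}
    (hx : party x = party p) (hxp : ¬ lt p x) (hy : party p < party y) (hyx : succ y x)
    {a b : C} (ha : party a < party p) (hb : party b = party p) : succ b a := by
  by_cases hbp : lt b p
  · exact hSP.succ_of_lt_of_not_peak_lt hp (lt_of_party_lt hmono (hb ▸ ha)) (asymm_of lt hbp)
  · have hby : succ b y := hSP.succ_of_lt_of_not_lt_peak hp (lt_of_party_lt hmono (hb ▸ hy)) hbp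
    have hxa : succ x a := hSP.succ_of_lt_of_not_peak_lt hp (lt_of_party_lt hmono (hx ▸ ha)) hxp
    exact _root_.trans hby (_root_.trans hyx hxa)

theorem succ_of_party_eq_peak_add_one [IsStrictTotalOrder C succ]
    (hSP : SinglePeakedWith succ lt) (hp : ∀ c, c ≠ p → succ p c)
    (hmono : ∀ c c', lt c c' → party c ≤ party c')
    (hloses : ∀ x y, party x = party p → party y = party p + 1 → ¬ lt p x → ¬ succ y x)
    {a b : C} (ha : party a = party p + 1) (hb : party b = party p) : succ b a := by
  by_cases hpb : lt p b
  · exact hSP.succ_of_lt_of_not_lt_peak hp (lt_of_party_lt hmono (by omega)) (asymm_of lt hpb)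
  · rcases trichotomous_of succ b a with h | rfl | h
    · exact h
    · omega
    · exact absurd h (hloses b a hb ha hpb)

end PartyAxis

def IsFavouriteNominee {C : Type*} (succ : C → C → Prop) (m : ℕ) (nom : ℕ → C) (i : ℕ) : Prop :=
  ∀ i' ∈ Icc 1 m, i' ≠ i → succ (nom i) (nom i')

namespace IsFavouriteNominee

variable {C : Type*} {succ lt : C → C → Prop} [IsStrictTotalOrder C succ] {party : C → ℕ}
  {m : ℕ} {nom : ℕ → C} {i : ℕ}

theorem not_succ (hfav : IsFavouriteNominee succ m nom i) {j : ℕ} (hj : j ∈ Icc 1 m) :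
    ¬ succ (nom j) (nom i) := by
  rcases eq_or_ne j i with rfl | hji
  exacts [irrefl_of succ _, asymm_of succ (hfav j hj hji)]

variable [IsStrictTotalOrder C lt] {p : C}

theorem le_peak_add_one (hfav : IsFavouriteNominee succ m nom i) (hSP : SinglePeakedWith succ lt)
    (hp : ∀ c, c ≠ p → succ p c) (hmono : ∀ c c', lt c c' → party c ≤ party c')
    (hnom : ValidNom party m nom) (hi : i ∈ Icc 1 m) : i ≤ party p + 1 := by
  by_contra! h
  have hj : party p + 1 ∈ Icc 1 m := mem_Icc.mpr ⟨by omega, by grind⟩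
  have hpi := hnom i hi
  have hpj := hnom _ hj
  exact hfav.not_succ hj (succ_of_peak_party_lt_of_party_lt hSP hp hmono (by omega) (by omega))

theorem peak_sub_one_le (hfav : IsFavouriteNominee succ m nom i) (hSP : SinglePeakedWith succ lt)
    (hp : ∀ c, c ≠ p → succ p c) (hmono : ∀ c c', lt c c' → party c ≤ party c')
    (hnom : ValidNom party m nom) (hi : i ∈ Icc 1 m) (hpm : party p ≤ m) : party p - 1 ≤ i := by
  by_contra! h
  have hj : party p - 1 ∈ Icc 1 m := mem_Icc.mpr ⟨by grind, by omega⟩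
  have hpi := hnom i hi
  have hpj := hnom _ hj
  exact hfav.not_succ hj (succ_of_party_lt_of_party_lt_peak hSP hp hmono (by omega) (by omega))

theorem peak_le_of_succ (hfav : IsFavouriteNominee succ m nom i) (hSP : SinglePeakedWith succ lt)
    (hp : ∀ c, c ≠ p → succ p c) (hmono : ∀ c c', lt c c' → party c ≤ party c')
    (hnom : ValidNom party m nom) (hi : i ∈ Icc 1 m) (hpm : party p ≤ m) {x y : C}
    (hx : party x = party p) (hxp : ¬ lt p x) (hy : party p < party y) (hyx : succ y x) :
    party p ≤ i := by
  by_contra! h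
  have hj : party p ∈ Icc 1 m := mem_Icc.mpr ⟨by grind, hpm⟩
  have hpi := hnom i hi
  exact hfav.not_succ hj
    (succ_of_party_lt_peak_of_succ hSP hp hmono hx hxp hy hyx (by omega) (hnom _ hj))

theorem ne_peak_add_one (hfav : IsFavouriteNominee succ m nom i) (hSP : SinglePeakedWith succ lt)
    (hp : ∀ c, c ≠ p → succ p c) (hmono : ∀ c c', lt c c' → party c ≤ party c')
    (hnom : ValidNom party m nom) (hi : i ∈ Icc 1 m) (hp1 : 1 ≤ party p)
    (hloses : ∀ x y, party x = party p → party y = party p + 1 → ¬ lt p x → ¬ succ y x) :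
    i ≠ party p + 1 := by
  rintro rfl
  have hj : party p ∈ Icc 1 m := mem_Icc.mpr ⟨hp1, by grind⟩
  exact hfav.not_succ hj
    (succ_of_party_eq_peak_add_one hSP hp hmono hloses (hnom _ hi) (hnom _ hj))

end IsFavouriteNominee

/-- Lemma: for a party-aligned single-peaked vote there are (at most) two parties,
adjacent along the party axis (possibly one single party), such that in every
reduced election the voter's most-preferred nominee belongs to one of them. -/
theorem two_possible_votes
    {C : Type*} [Fintype C] {m : ℕ} (hm : 1 ≤ m)
    (party : C → ℕ) (hpr : ∀ c : C, party c ∈ Finset.Icc 1 m)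
    (hne : ∀ i ∈ Finset.Icc 1 m, ∃ c : C, party c = i)
    (succ : C → C → Prop) (hsto : IsStrictTotalOrder C succ)
    (hPASP : PASPVote party succ) :
    ∃ A ∈ Finset.Icc 1 m, ∃ B ∈ Finset.Icc 1 m, (B = A ∨ B = A + 1) ∧
      ∀ nom : ℕ → C, ValidNom party m nom →
        ∀ i ∈ Finset.Icc 1 m,
          (∀ i' ∈ Finset.Icc 1 m, i' ≠ i → succ (nom i) (nom i')) →
          i = A ∨ i = B := by
  obtain ⟨lt, hlt, hmono, hSP⟩ := hPASP
  obtain ⟨c, -⟩ := hne 1 (mem_Icc.mpr ⟨le_rfl, hm⟩)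
  have : Nonempty C := ⟨c⟩
  obtain ⟨p, hp⟩ := exists_forall_ne_succ (succ := succ)
  have hpm := mem_Icc.mp (hpr p)
  by_cases hbeats : ∃ x y, party x = party p ∧ party y = party p + 1 ∧ ¬ lt p x ∧ succ y x
  · obtain ⟨x, y, hx, hy, hxp, hyx⟩ := hbeats
    refine ⟨party p, hpr p, party p + 1, hy ▸ hpr y, Or.inr rfl, fun nom hnom i hi hfav => ?_⟩
    have hfav : IsFavouriteNominee succ m nom i := hfav
    have hle := hfav.le_peak_add_one hSP hp hmono hnom hi
    have hge := hfav.peak_le_of_succ hSP hp hmono hnom hi hpm.2 hx hxp (by omega) hyx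
    omega
  · push Not at hbeats
    -- `max` covers `party p = 1`, where the only possible vote is for party `1`
    refine ⟨max 1 (party p - 1), mem_Icc.mpr ⟨by omega, by omega⟩, party p, hpr p, by omega,
      fun nom hnom i hi hfav => ?_⟩
    have hfav : IsFavouriteNominee succ m nom i := hfav
    have hle := hfav.le_peak_add_one hSP hp hmono hnom hi
    have hge := hfav.peak_sub_one_le hSP hp hmono hnom hi hpm.2
    have hnext := hfav.ne_peak_add_one hSP hp hmono hnom hi hpm.1 hbeats
    have hi1 := (mem_Icc.mp hi).1
    omega
end

section
/- There exists an election with two parties A = {a₁, a₂} and B = {b₁, b₂} and three voters with preferences v₁: a₁ ≻ b₁ ≻ a₂ ≻ b₂; v₂: b₁ ≻ a₂ ≻ b₂ ≻ a₁; v₃: a₂ ≻ b₂ ≻ a₁ ≻ b₁, whose profile is party-aligned single-peaked, but which admits no pure Nash equilibrium: every one of the four possible nomination schemes admits a Nash deviation by the losing party. -/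
/-- Rank table of the three voters over the candidates `a₁ = 0`, `a₂ = 1`,
`b₁ = 2`, `b₂ = 3` (smaller rank = more preferred):
`v₁: a₁ ≻ b₁ ≻ a₂ ≻ b₂`, `v₂: b₁ ≻ a₂ ≻ b₂ ≻ a₁`, `v₃: a₂ ≻ b₂ ≻ a₁ ≻ b₁`. -/
def rk8 : Matrix (Fin 3) (Fin 4) ℕ := !![0, 2, 1, 3; 3, 1, 0, 2; 2, 0, 3, 1]

/-- The preference relations of the three voters. -/
def succ8 (v : Fin 3) (c c' : Fin 4) : Prop := rk8 v c < rk8 v c'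

/-- Parties `A = {a₁, a₂}` (index 1) and `B = {b₁, b₂}` (index 2). -/
def party8 : Fin 4 → ℕ := fun c => if c.val < 2 then 1 else 2


/-! In a two-party election the Plurality winner is the pairwise majority winner. Here `a₁` beats
`b₁` 2–1, `b₂` beats `a₁` 2–1, `a₂` beats `b₂` 3–0 and `b₁` beats `a₂` 2–1, so best responses cycle
`(a₁, b₁) → (a₁, b₂) → (a₂, b₂) → (a₂, b₁) → (a₁, b₁)`: in each of the four nomination schemes
the losing party can swap its nominee and win. -/

open Finset

section TwoParties

variable {C V : Type*} (succ : V → C → C → Prop)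

noncomputable def prefCount (x y : C) : ℕ := {v | succ v x y}.ncard

variable {succ} {nom : ℕ → C} {i j : ℕ}

lemma mem_Icc_one_two_iff (hi : i ∈ Icc 1 2) (hj : j ∈ Icc 1 2) (hij : i ≠ j)
    {i' : ℕ} : i' ∈ Icc 1 2 ↔ i' = i ∨ i' = j := by
  simp only [mem_Icc] at *
  omega

lemma votesFor_two (hi : i ∈ Icc 1 2) (hj : j ∈ Icc 1 2) (hij : i ≠ j) :
    votesFor succ 2 nom i = {v | succ v (nom i) (nom j)} := by
  ext v
  simp only [votesFor, Set.mem_ofPred_eq, mem_Icc_one_two_iff hi hj hij]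
  refine ⟨fun h => h j (Or.inr rfl) hij.symm, ?_⟩
  rintro h i' (rfl | rfl) hne
  · exact absurd rfl hne
  · exact h

lemma score_two (hi : i ∈ Icc 1 2) (hj : j ∈ Icc 1 2) (hij : i ≠ j) :
    score succ 2 nom i = prefCount succ (nom i) (nom j) := by
  rw [score, votesFor_two hi hj hij, prefCount]

lemma isWinner_two_iff (hi : i ∈ Icc 1 2) (hj : j ∈ Icc 1 2) (hij : i ≠ j) :
    IsWinner succ 2 nom i ↔
      prefCount succ (nom j) (nom i) ≤ prefCount succ (nom i) (nom j) := by
  rw [← score_two hi hj hij, ← score_two hj hi hij.symm]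
  refine ⟨fun h => h j hj, ?_⟩
  intro h i' hi'
  rcases (mem_Icc_one_two_iff hi hj hij).1 hi' with rfl | rfl
  exacts [le_rfl, h]

lemma nashDeviation_two_iff {party : C → ℕ} {c' : C}
    (hi : i ∈ Icc 1 2) (hj : j ∈ Icc 1 2) (hij : i ≠ j) :
    NashDeviation party succ 2 nom i c' ↔
      party c' = i ∧ c' ≠ nom i ∧
      prefCount succ (nom i) (nom j) < prefCount succ (nom j) (nom i) ∧
      prefCount succ (nom j) c' ≤ prefCount succ c' (nom j) := by
  rw [NashDeviation, isWinner_two_iff hi hj hij, isWinner_two_iff hi hj hij,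
    Function.update_self, Function.update_of_ne hij.symm, not_le]

lemma validNom_two_iff {party : C → ℕ} :
    ValidNom party 2 nom ↔ party (nom 1) = 1 ∧ party (nom 2) = 2 := by
  refine ⟨fun h => ⟨h 1 (by simp), h 2 (by simp)⟩, ?_⟩
  rintro ⟨h₁, h₂⟩ i hi
  rcases (mem_Icc_one_two_iff (i := 1) (j := 2) (by simp) (by simp) (by simp)).1 hi with rfl | rfl
  exacts [h₁, h₂]

lemma prefCount_eq_card_filter [Fintype V] {x y : C} [∀ v, Decidable (succ v x y)] :
    prefCount succ x y = #{v | succ v x y} := by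
  rw [prefCount, Set.ncard_eq_toFinset_card']
  simp

end TwoParties

lemma paspVote_of_injective {C : Type*} {party : C → ℕ} {succ : C → C → Prop} (f : C → ℕ)
    (hf : Function.Injective f) (hparty : ∀ c c', f c < f c' → party c ≤ party c')
    (hsp : SinglePeakedWith succ (f · < f ·)) : PASPVote party succ :=
  ⟨(f · < f ·),
    { trichotomous _ _ hab hba := hf (le_antisymm (not_lt.1 hba) (not_lt.1 hab))
      irrefl a := lt_irrefl (f a)
      trans _ _ _ := lt_trans }, hparty, hsp⟩

/-- Positions on the voters' perceived axes: `a₂ ◁ a₁ ◁ b₁ ◁ b₂` for `v₁`,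
`a₁ ◁ a₂ ◁ b₁ ◁ b₂` for `v₂` and `a₁ ◁ a₂ ◁ b₂ ◁ b₁` for `v₃`. -/
def axis8 : Matrix (Fin 3) (Fin 4) ℕ := !![1, 0, 2, 3; 0, 1, 2, 3; 0, 1, 3, 2]

lemma paspVote8 (v : Fin 3) : PASPVote party8 (succ8 v) := by
  refine paspVote_of_injective (axis8 v) ?_ ?_ ?_
  · fin_cases v <;> decide
  · revert v; decide
  · unfold SinglePeakedWith succ8; revert v; decide

instance (v : Fin 3) (x y : Fin 4) : Decidable (succ8 v x y) :=
  inferInstanceAs (Decidable (rk8 v x < rk8 v y))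

lemma exists_nashDeviation8 (nom : ℕ → Fin 4) (hnom : ValidNom party8 2 nom) :
    (∃ c', NashDeviation party8 succ8 2 nom 1 c') ∨
      (∃ c', NashDeviation party8 succ8 2 nom 2 c') := by
  have h₁ : 1 ∈ Icc 1 2 := by simp
  have h₂ : 2 ∈ Icc 1 2 := by simp
  simp only [nashDeviation_two_iff h₁ h₂ (by simp), nashDeviation_two_iff h₂ h₁ (by simp),
    prefCount_eq_card_filter]
  rw [validNom_two_iff] at hnom
  generalize nom 1 = x, nom 2 = y at *
  revert x y
  decide

/-- There is a two-party election with three voters whose profile is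
party-aligned single-peaked, but every nomination scheme admits a Nash
deviation (by the losing party); in particular no pure Nash equilibrium exists. -/
theorem two_parties_no_nash_equilibrium :
    (∀ v : Fin 3, PASPVote party8 (succ8 v)) ∧
    (∀ nom : ℕ → Fin 4, ValidNom party8 2 nom →
      (∃ c' : Fin 4, NashDeviation party8 succ8 2 nom 1 c') ∨
      (∃ c' : Fin 4, NashDeviation party8 succ8 2 nom 2 c')) ∧
    ¬ ∃ nom : ℕ → Fin 4, ValidNom party8 2 nom ∧ NashEq party8 succ8 2 nom := by
  refine ⟨paspVote8, exists_nashDeviation8, ?_⟩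
  rintro ⟨nom, hnom, heq⟩
  rcases exists_nashDeviation8 nom hnom with ⟨c', hc'⟩ | ⟨c', hc'⟩
  exacts [heq 1 (by simp) c' hc', heq 2 (by simp) c' hc']
end

section
/- There exists a 1-D Euclidean election with four parties, each of size at most 2, whose preference profile is both single-peaked and party-aligned single-peaked, that admits no pure Nash equilibrium. Concretely: voters at positions 2 (×5), 3 (×2), 5 (×6), 8.9 (×2), 11 (×7) on the real line; parties P₁ = {p₁ at 2, p₁' at 5}, P₂ = {p₂ at 7, p₂' at 11}, P₃ = {p₃ at 0}, P₄ = {p₄ at 12}; with each voter ranking candidates by increasing distance. In every nomination scheme either P₁ or P₂ has a Nash deviation. -/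
/-- Positions of the 22 voters: 5 voters at 2, 2 at 3, 6 at 5, 2 at 8.9, 7 at 11. -/
noncomputable def posV10 : Fin 22 → ℝ := fun v =>
  if v.val < 5 then 2 else if v.val < 7 then 3 else if v.val < 13 then 5
  else if v.val < 15 then 8.9 else 11

/-- Positions of the candidates: `p₁ = 0` at 2, `p₁' = 1` at 5, `p₂ = 2` at 7,
`p₂' = 3` at 11, `p₃ = 4` at 0, `p₄ = 5` at 12. -/
noncomputable def posC10 : Fin 6 → ℝ := fun c =>
  if c.val = 0 then 2 else if c.val = 1 then 5 else if c.val = 2 then 7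
  else if c.val = 3 then 11 else if c.val = 4 then 0 else 12

/-- Parties `P₁ = {p₁, p₁'}`, `P₂ = {p₂, p₂'}`, `P₃ = {p₃}`, `P₄ = {p₄}`. -/
def party10 : Fin 6 → ℕ := fun c =>
  if c.val ≤ 1 then 1 else if c.val ≤ 3 then 2 else if c.val = 4 then 3 else 4

/-- The party axis: the parties are ordered `P₃ < P₁ < P₂ < P₄` along the line,
so on the axis `P₃` gets position 1, `P₁` position 2, `P₂` position 3, `P₄`
position 4. -/
def partyAxis10 : ℕ → ℕ := fun n =>
  if n = 1 then 2 else if n = 2 then 3 else if n = 3 then 1 else 4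

/-- The 1-D Euclidean preferences: closer candidates are preferred. -/
def succ10 (v : Fin 22) (c c' : Fin 6) : Prop :=
  |posV10 v - posC10 c| < |posV10 v - posC10 c'|

/-! In the four schemes `(p₁, p₂)`, `(p₁', p₂)`, `(p₁', p₂')`, `(p₁, p₂')` the scores of
`P₁` and `P₂` are `(7, 8)`, `(8, 2)`, `(8, 9)`, `(13, 9)`, while the singleton parties get at
most `7`. So `P₁` wins exactly when `p₁` is nominated together with `p₂'` or `p₁'` together with
`p₂`, and `P₂` wins otherwise. Both `P₁` and `P₂` have two candidates, and either party swapping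
its nominee flips this condition: whichever of the two loses can swap and win. -/

open Finset Function

lemma abs_sub_lt_abs_sub_iff_of_lt {x a b : ℝ} (hab : a < b) :
    |x - a| < |x - b| ↔ 2 * x < a + b := by
  rw [← sq_lt_sq]
  constructor <;> intro h <;> nlinarith

lemma singlePeakedWith_abs_sub {C : Type*} (p : C → ℝ) (x : ℝ) :
    SinglePeakedWith (fun a b => |x - p a| < |x - p b|) (InvImage (· < ·) p) := by
  intro a b c (hab : p a < p b) (hbc : p b < p c) hpref
  rw [abs_sub_lt_abs_sub_iff_of_lt hab] at hpref
  rw [abs_sub_lt_abs_sub_iff_of_lt hbc]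
  linarith

lemma isStrictTotalOrder_invImage {α β : Type*} [LinearOrder α] {f : β → α}
    (hf : Injective f) : IsStrictTotalOrder β (InvImage (· < ·) f) where
  toTrichotomous := InvImage.trichotomous hf

section Plurality

variable {C V : Type*} {succ : V → C → C → Prop} {k : ℕ} {nom nom' : ℕ → C}

lemma validNom_update {party : C → ℕ} (h : ValidNom party k nom) {i : ℕ} {c : C}
    (hc : party c = i) : ValidNom party k (update nom i c) := by
  intro j hj
  by_cases hji : j = i
  · subst hji; simpa using hc
  · simpa [hji] using h j hj

lemma votesFor_congr (h : ∀ j ∈ Icc 1 k, nom j = nom' j) {i : ℕ} (hi : i ∈ Icc 1 k) :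
    votesFor succ k nom i = votesFor succ k nom' i := by
  ext v
  refine forall₂_congr fun j hj => ?_
  rw [h i hi, h j hj]

lemma isWinner_congr (h : ∀ j ∈ Icc 1 k, nom j = nom' j) {i : ℕ} (hi : i ∈ Icc 1 k) :
    IsWinner succ k nom i ↔ IsWinner succ k nom' i := by
  refine forall₂_congr fun j hj => ?_
  simp only [score, votesFor_congr h hi, votesFor_congr h hj]

lemma score_eq_card [Fintype V] [∀ v, DecidableRel (succ v)] (nom : ℕ → C) (i : ℕ) :
    score succ k nom i = #{v | ∀ j ∈ Icc (1 : ℕ) k, j ≠ i → succ v (nom i) (nom j)} := by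
  rw [score, votesFor, ← Set.ncard_coe_finset, coe_filter]
  simp only [mem_univ, true_and]

end Plurality

/-- Positions times `10`: on these integers the Euclidean preferences become decidable. -/
def scaledPosV10 : Fin 22 → ℤ := fun v =>
  if v.val < 5 then 20 else if v.val < 7 then 30 else if v.val < 13 then 50
  else if v.val < 15 then 89 else 110

def scaledPosC10 : Fin 6 → ℤ := fun c =>
  if c.val = 0 then 20 else if c.val = 1 then 50 else if c.val = 2 then 70
  else if c.val = 3 then 110 else if c.val = 4 then 0 else 120

lemma posV10_eq_div (v : Fin 22) : posV10 v = scaledPosV10 v / 10 := by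
  unfold posV10 scaledPosV10; split_ifs <;> norm_num

lemma posC10_eq_div (c : Fin 6) : posC10 c = scaledPosC10 c / 10 := by
  unfold posC10 scaledPosC10; split_ifs <;> norm_num

lemma posC10_lt_posC10_iff {c c' : Fin 6} :
    posC10 c < posC10 c' ↔ scaledPosC10 c < scaledPosC10 c' := by
  rw [posC10_eq_div, posC10_eq_div, div_lt_div_iff_of_pos_right (by norm_num), Int.cast_lt]

lemma posC10_injective : Injective posC10 := by
  intro c c' h
  rw [posC10_eq_div, posC10_eq_div, div_left_inj' (by norm_num), Int.cast_inj] at h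
  exact (by decide : Injective scaledPosC10) h

lemma succ10_eq_sq_lt : succ10 = fun v c c' =>
    (scaledPosV10 v - scaledPosC10 c) ^ 2 < (scaledPosV10 v - scaledPosC10 c') ^ 2 := by
  ext v c c'
  have hdist (d : Fin 6) : posV10 v - posC10 d = (scaledPosV10 v - scaledPosC10 d : ℤ) / 10 := by
    rw [posV10_eq_div, posC10_eq_div]; push_cast; ring
  rw [succ10, hdist, hdist, ← sq_lt_sq, div_pow, div_pow,
    div_lt_div_iff_of_pos_right (by norm_num)]
  exact_mod_cast Iff.rfl

def nomination10 (c₁ c₂ : Fin 6) : ℕ → Fin 6 := fun i =>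
  if i = 1 then c₁ else if i = 2 then c₂ else if i = 3 then 4 else 5

lemma eq_nomination10_of_validNom {nom : ℕ → Fin 6} (h : ValidNom party10 4 nom) :
    ∀ j ∈ Icc 1 4, nom j = nomination10 (nom 1) (nom 2) j := by
  have h₃ : ∀ c, party10 c = 3 → c = 4 := by decide
  have h₄ : ∀ c, party10 c = 4 → c = 5 := by decide
  intro j hj
  obtain ⟨hj₁, hj₄⟩ := mem_Icc.mp hj
  interval_cases j
  · rfl
  · rfl
  · exact h₃ _ (h 3 (by decide))
  · exact h₄ _ (h 4 (by decide))

lemma isWinner_nomination10_one : ∀ c₁ c₂ : Fin 6, party10 c₁ = 1 → party10 c₂ = 2 →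
    (IsWinner succ10 4 (nomination10 c₁ c₂) 1 ↔ (c₁ = 0 ↔ c₂ = 3)) := by
  rw [succ10_eq_sq_lt]
  simp only [IsWinner, score_eq_card]
  decide

lemma isWinner_nomination10_two : ∀ c₁ c₂ : Fin 6, party10 c₁ = 1 → party10 c₂ = 2 →
    (IsWinner succ10 4 (nomination10 c₁ c₂) 2 ↔ ¬(c₁ = 0 ↔ c₂ = 3)) := by
  rw [succ10_eq_sq_lt]
  simp only [IsWinner, score_eq_card]
  decide

lemma succ10_isStrictTotalOrder (v : Fin 22) : IsStrictTotalOrder (Fin 6) (succ10 v) := by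
  have hinj : ∀ v, Injective fun c => (scaledPosV10 v - scaledPosC10 c) ^ 2 := by decide
  rw [succ10_eq_sq_lt]
  exact isStrictTotalOrder_invImage (hinj v)

lemma partyAxis10_le_of_posC10_lt {c c' : Fin 6} (h : posC10 c < posC10 c') :
    partyAxis10 (party10 c) ≤ partyAxis10 (party10 c') := by
  rw [posC10_lt_posC10_iff] at h
  revert c c'
  decide

lemma isWinner10_one_iff {nom : ℕ → Fin 6} (h : ValidNom party10 4 nom) :
    IsWinner succ10 4 nom 1 ↔ (nom 1 = 0 ↔ nom 2 = 3) := by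
  rw [isWinner_congr (eq_nomination10_of_validNom h) (by decide)]
  exact isWinner_nomination10_one _ _ (h 1 (by decide)) (h 2 (by decide))

lemma isWinner10_two_iff {nom : ℕ → Fin 6} (h : ValidNom party10 4 nom) :
    IsWinner succ10 4 nom 2 ↔ ¬(nom 1 = 0 ↔ nom 2 = 3) := by
  rw [isWinner_congr (eq_nomination10_of_validNom h) (by decide)]
  exact isWinner_nomination10_two _ _ (h 1 (by decide)) (h 2 (by decide))

lemma exists_swap_party10 : ∀ c d : Fin 6, party10 c ≤ 2 → party10 d = party10 c →
    ∃ c', party10 c' = party10 c ∧ c' ≠ c ∧ (c' = d ↔ c ≠ d) := by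
  decide

lemma exists_nashDeviation10 {nom : ℕ → Fin 6} (h : ValidNom party10 4 nom) :
    (∃ c', NashDeviation party10 succ10 4 nom 1 c') ∨
      (∃ c', NashDeviation party10 succ10 4 nom 2 c') := by
  have h₁ : party10 (nom 1) = 1 := h 1 (by decide)
  have h₂ : party10 (nom 2) = 2 := h 2 (by decide)
  by_cases hmatch : nom 1 = 0 ↔ nom 2 = 3
  · obtain ⟨c, hc, hne, hflip⟩ := exists_swap_party10 (nom 2) 3 (by omega) (by rw [h₂]; rfl)
    rw [h₂] at hc
    refine Or.inr ⟨c, hc, hne, by rw [isWinner10_two_iff h]; tauto, ?_⟩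
    rw [isWinner10_two_iff (validNom_update h hc), update_self, update_of_ne (by decide)]
    tauto
  · obtain ⟨c, hc, hne, hflip⟩ := exists_swap_party10 (nom 1) 0 (by omega) (by rw [h₁]; rfl)
    rw [h₁] at hc
    refine Or.inl ⟨c, hc, hne, by rw [isWinner10_one_iff h]; tauto, ?_⟩
    rw [isWinner10_one_iff (validNom_update h hc), update_self, update_of_ne (by decide)]
    tauto

/-- The 1-D Euclidean election with four parties of size at most 2 described
above has strict, single-peaked and party-aligned single-peaked preferences,
yet in every nomination scheme party `P₁` or party `P₂` has a Nash deviation;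
hence no pure Nash equilibrium exists. -/
theorem euclidean_four_parties_no_equilibrium :
    (∀ v : Fin 22, IsStrictTotalOrder (Fin 6) (succ10 v)) ∧
    (∃ lt : Fin 6 → Fin 6 → Prop, IsStrictTotalOrder (Fin 6) lt ∧
      ∀ v : Fin 22, SinglePeakedWith (succ10 v) lt) ∧
    (∀ v : Fin 22, PASPVote (fun c => partyAxis10 (party10 c)) (succ10 v)) ∧
    (∀ nom : ℕ → Fin 6, ValidNom party10 4 nom →
      (∃ c' : Fin 6, NashDeviation party10 succ10 4 nom 1 c') ∨
      (∃ c' : Fin 6, NashDeviation party10 succ10 4 nom 2 c')) ∧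
    ¬ ∃ nom : ℕ → Fin 6, ValidNom party10 4 nom ∧ NashEq party10 succ10 4 nom := by
  have haxis := isStrictTotalOrder_invImage posC10_injective
  have hpeak (v : Fin 22) := singlePeakedWith_abs_sub posC10 (posV10 v)
  refine ⟨succ10_isStrictTotalOrder, ⟨_, haxis, hpeak⟩,
    fun v => ⟨_, haxis, fun _ _ => partyAxis10_le_of_posC10_lt, hpeak v⟩,
    fun _ => exists_nashDeviation10, ?_⟩
  rintro ⟨nom, hvalid, hnash⟩
  rcases exists_nashDeviation10 hvalid with ⟨c', hdev⟩ | ⟨c', hdev⟩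
  · exact hnash 1 (by decide) c' hdev
  · exact hnash 2 (by decide) c' hdev
end

section
/- Given a party-aligned single-peaked profile with party axis P_1 < ... < P_k, partition the voters into sets V^{P_i} (voters who vote for P_i's nominee in every nomination scheme, equivalently whose top |P_i| candidates are exactly P_i) and V^{(P_i,P_{i+1})} (remaining voters who always vote for the nominee of P_i or of P_{i+1}). Then these sets are pairwise disjoint and their union is the entire voter set V. -/
/-- Voters who vote for party `i`'s nominee in every nomination scheme. -/
def AlwaysFor {C V : Type*} (party : C → ℕ) (succ : V → C → C → Prop)
    (k i : ℕ) : Set V :=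
  {v | ∀ nom : ℕ → C, ValidNom party k nom → v ∈ votesFor succ k nom i}

/-- Voters, not in `AlwaysFor i` or `AlwaysFor (i+1)`, who always vote for the
nominee of party `i` or of party `i+1`. -/
def BetweenFor {C V : Type*} (party : C → ℕ) (succ : V → C → C → Prop)
    (k i : ℕ) : Set V :=
  {v | v ∉ AlwaysFor party succ k i ∧ v ∉ AlwaysFor party succ k (i + 1) ∧
    ∀ nom : ℕ → C, ValidNom party k nom →
      (v ∈ votesFor succ k nom i ∨ v ∈ votesFor succ k nom (i + 1))}

/-- The voter set `V_{≤ i}`. -/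
def Vle {C V : Type*} (party : C → ℕ) (succ : V → C → C → Prop)
    (k i : ℕ) : Set V :=
  (⋃ j ∈ Finset.Icc 1 i, AlwaysFor party succ k j) ∪
    (⋃ j ∈ Finset.Icc 1 (i - 1), BetweenFor party succ k j)

/-- The voter set `V_{≥ i}`. -/
def Vge {C V : Type*} (party : C → ℕ) (succ : V → C → C → Prop)
    (k i : ℕ) : Set V :=
  (⋃ j ∈ Finset.Icc i k, AlwaysFor party succ k j) ∪
    (⋃ j ∈ Finset.Icc i (k - 1), BetweenFor party succ k j)

/-- `nom` extends the partial nomination scheme `cs` given on positions `1,…,i`. -/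
def Extends {C : Type*} (i : ℕ) (cs nom : ℕ → C) : Prop :=
  ∀ j ∈ Finset.Icc 1 i, nom j = cs j

/-- `nom` extends the partial nomination scheme `cs` given on positions `i,…,k`. -/
def ExtendsR {C : Type*} (i k : ℕ) (cs nom : ℕ → C) : Prop :=
  ∀ j ∈ Finset.Icc i k, nom j = cs j

/-- Number of votes obtained by party `j`'s nominee from the voters in `W`. -/
noncomputable def votesFrom {C V : Type*} (W : Set V) (succ : V → C → C → Prop)
    (k : ℕ) (nom : ℕ → C) (j : ℕ) : ℕ :=
  (W ∩ votesFor succ k nom j).ncard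

/-- A left-feasible partial nomination scheme for `i` (with target score `sstar`):
condition (α) plus the no-deviation condition (β). -/
def LeftFeasible {C V : Type*} (party : C → ℕ) (succ : V → C → C → Prop)
    (k sstar i : ℕ) (cs : ℕ → C) : Prop :=
  (∀ j ∈ Finset.Icc 1 i, party (cs j) = j) ∧
  ∀ nom : ℕ → C, ValidNom party k nom → Extends i cs nom →
    ∀ j ∈ Finset.Icc 1 (i - 1),
      votesFrom (Vle party succ k i) succ k nom j ≤ sstar ∧
      (votesFrom (Vle party succ k i) succ k nom j < sstar →
        ∀ c' : C, party c' = j → c' ≠ cs j →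
          votesFrom (Vle party succ k i) succ k (Function.update nom j c') j < sstar)

/-- A right-feasible partial nomination scheme for `i`. -/
def RightFeasible {C V : Type*} (party : C → ℕ) (succ : V → C → C → Prop)
    (k sstar i : ℕ) (cs : ℕ → C) : Prop :=
  (∀ j ∈ Finset.Icc i k, party (cs j) = j) ∧
  ∀ nom : ℕ → C, ValidNom party k nom → ExtendsR i k cs nom →
    ∀ j ∈ Finset.Icc (i + 1) k,
      votesFrom (Vge party succ k i) succ k nom j ≤ sstar ∧
      (votesFrom (Vge party succ k i) succ k nom j < sstar →
        ∀ c' : C, party c' = j → c' ≠ cs j →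
          votesFrom (Vge party succ k i) succ k (Function.update nom j c') j < sstar)

/-- A left-PP-feasible partial nomination scheme for `i`: only condition (α). -/
def LeftPPFeasible {C V : Type*} (party : C → ℕ) (succ : V → C → C → Prop)
    (k sstar i : ℕ) (cs : ℕ → C) : Prop :=
  (∀ j ∈ Finset.Icc 1 i, party (cs j) = j) ∧
  ∀ nom : ℕ → C, ValidNom party k nom → Extends i cs nom →
    ∀ j ∈ Finset.Icc 1 (i - 1),
      votesFrom (Vle party succ k i) succ k nom j ≤ sstar

/-- A right-PP-feasible partial nomination scheme for `i`. -/
def RightPPFeasible {C V : Type*} (party : C → ℕ) (succ : V → C → C → Prop)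
    (k sstar i : ℕ) (cs : ℕ → C) : Prop :=
  (∀ j ∈ Finset.Icc i k, party (cs j) = j) ∧
  ∀ nom : ℕ → C, ValidNom party k nom → ExtendsR i k cs nom →
    ∀ j ∈ Finset.Icc (i + 1) k,
      votesFrom (Vge party succ k i) succ k nom j ≤ sstar

/-- The pair `(s, s')` is left-viable for the candidate pair `(c, c')` of
parties `P_{i-1}` and `P_i`. -/
def LeftViablePair {C V : Type*} (party : C → ℕ) (succ : V → C → C → Prop)
    (k sstar i : ℕ) (c c' : C) (s s' : ℕ) : Prop :=
  ∃ cs : ℕ → C, LeftFeasible party succ k sstar i cs ∧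
    cs (i - 1) = c ∧ cs i = c' ∧
    ∀ nom : ℕ → C, ValidNom party k nom → Extends i cs nom →
      votesFrom (Vle party succ k i) succ k nom (i - 1) = s ∧
      votesFrom (Vle party succ k i) succ k nom i = s'

/-- `s` is a left-viable score for candidate `c` of party `P_i`. -/
def LeftViableScore {C V : Type*} (party : C → ℕ) (succ : V → C → C → Prop)
    (k sstar i : ℕ) (c : C) (s : ℕ) : Prop :=
  ∃ cs : ℕ → C, LeftFeasible party succ k sstar i cs ∧ cs i = c ∧
    ∀ nom : ℕ → C, ValidNom party k nom → Extends i cs nom →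
      votesFrom (Vle party succ k i) succ k nom i = s

/-- `s` is a right-viable score for candidate `c` of party `P_i`. -/
def RightViableScore {C V : Type*} (party : C → ℕ) (succ : V → C → C → Prop)
    (k sstar i : ℕ) (c : C) (s : ℕ) : Prop :=
  ∃ cs : ℕ → C, RightFeasible party succ k sstar i cs ∧ cs i = c ∧
    ∀ nom : ℕ → C, ValidNom party k nom → ExtendsR i k cs nom →
      votesFrom (Vge party succ k i) succ k nom i = s

/-- `s` is a left-PP-viable score for candidate `c` of party `P_i`. -/
def LeftPPViableScore {C V : Type*} (party : C → ℕ) (succ : V → C → C → Prop)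
    (k sstar i : ℕ) (c : C) (s : ℕ) : Prop :=
  ∃ cs : ℕ → C, LeftPPFeasible party succ k sstar i cs ∧ cs i = c ∧
    ∀ nom : ℕ → C, ValidNom party k nom → Extends i cs nom →
      votesFrom (Vle party succ k i) succ k nom i = s

/-- `s` is a right-PP-viable score for candidate `c` of party `P_i`. -/
def RightPPViableScore {C V : Type*} (party : C → ℕ) (succ : V → C → C → Prop)
    (k sstar i : ℕ) (c : C) (s : ℕ) : Prop :=
  ∃ cs : ℕ → C, RightPPFeasible party succ k sstar i cs ∧ cs i = c ∧
    ∀ nom : ℕ → C, ValidNom party k nom → ExtendsR i k cs nom →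
      votesFrom (Vge party succ k i) succ k nom i = s

/-!
A vote is single-peaked along a perceived axis on which the parties appear in order.
If she voted for party `a` in one nomination scheme and for party `b ≥ a + 2` in another, let
`z` and `w` be the nominees of party `a + 1` in the two schemes; both lie on the axis strictly
between the two winning nominees `x` and `y`. Single-peakedness turns `x ≻ z` into `z ≻ y`, and
`y ≻ w` into `w ≻ x`, giving the cycle `x ≻ z ≻ y ≻ w ≻ x`. Hence the parties a voter can vote
for form either a single party or two adjacent ones, and these two cases are exactly the sets
`AlwaysFor i` and `BetweenFor i`.
-/

open Finset

section SinglePeaked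

variable {C : Type*} {succ lt : C → C → Prop}

theorem SinglePeakedWith.rel_of_rel_right [IsStrictTotalOrder C succ] [Std.Irrefl lt]
    (hsp : SinglePeakedWith succ lt) {a b c : C} (hab : lt a b) (hbc : lt b c)
    (hcb : succ c b) : succ b a := by
  rcases trichotomous_of succ b a with h | rfl | h
  · exact h
  · exact (irrefl b hab).elim
  · exact (asymm hcb (hsp a b c hab hbc h)).elim

theorem SinglePeakedWith.not_rel_right_of_rel_left [IsStrictTotalOrder C succ]
    [Std.Irrefl lt]
    (hsp : SinglePeakedWith succ lt) {x y z w : C} (hxz : lt x z) (hzy : lt z y)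
    (hxw : lt x w) (hwy : lt w y) (hz : succ x z) : ¬ succ y w := fun hw =>
  asymm (_root_.trans hz (hsp x z y hxz hzy hz))
    (_root_.trans hw (hsp.rel_of_rel_right hxw hwy hw))

end SinglePeaked

theorem PASPVote.exists_axis {C : Type*} {party : C → ℕ} {succ : C → C → Prop}
    (h : PASPVote party succ) :
    ∃ lt : C → C → Prop, IsStrictTotalOrder C lt ∧
      (∀ c c' : C, party c < party c' → lt c c') ∧ SinglePeakedWith succ lt := by
  obtain ⟨lt, hlt, hmono, hsp⟩ := h
  refine ⟨lt, hlt, fun c c' hcc' => ?_, hsp⟩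
  rcases trichotomous_of lt c c' with h | rfl | h
  · exact h
  · exact (lt_irrefl _ hcc').elim
  · exact absurd (hmono c' c h) (not_le.2 hcc')

theorem exists_validNom {C : Type*} [Nonempty C] {party : C → ℕ} {k : ℕ}
    (hne : ∀ i ∈ Icc 1 k, ∃ c : C, party c = i) : ∃ nom : ℕ → C, ValidNom party k nom := by
  choose! nom hnom using hne
  exact ⟨nom, hnom⟩

theorem eq_singleton_or_eq_pair_of_forall_le_add_one {s : Set ℕ} (hs : s.Nonempty)
    (h : ∀ i ∈ s, ∀ j ∈ s, j ≤ i + 1) : (∃ i, s = {i}) ∨ ∃ t, s = {t, t + 1} := by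
  obtain ⟨i, hi⟩ := hs
  by_cases hsi : s = {i}
  · exact .inl ⟨i, hsi⟩
  obtain ⟨j, hj, hji⟩ : ∃ j ∈ s, j ≠ i := by
    by_contra! hall
    exact hsi (Set.eq_singleton_iff_unique_mem.2 ⟨hi, hall⟩)
  have := h i hi j hj; have := h j hj i hi
  refine .inr ⟨min i j, Set.ext fun m => ?_⟩
  simp only [Set.mem_insert_iff, Set.mem_singleton_iff]
  constructor
  · intro hm
    have := h i hi m hm; have := h m hm i hi; have := h j hj m hm; have := h m hm j hj
    omega
  · intro hm
    obtain rfl | rfl : m = i ∨ m = j := by omega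
    exacts [hi, hj]

theorem singleton_ne_pair_add_one (i j : ℕ) : ({i} : Set ℕ) ≠ {j, j + 1} := by
  intro h
  have hj : j ∈ ({i} : Set ℕ) := h ▸ .inl rfl
  have hj' : j + 1 ∈ ({i} : Set ℕ) := h ▸ .inr rfl
  rw [Set.mem_singleton_iff] at hj hj'
  omega

theorem eq_of_pair_add_one_eq {i j : ℕ} (h : ({i, i + 1} : Set ℕ) = {j, j + 1}) : i = j := by
  have hi : i ∈ ({j, j + 1} : Set ℕ) := h ▸ .inl rfl
  have hj : j ∈ ({i, i + 1} : Set ℕ) := h ▸ .inl rfl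
  simp only [Set.mem_insert_iff, Set.mem_singleton_iff] at hi hj
  omega

section Voter

variable {C V : Type*} {party : C → ℕ} {succ : V → C → C → Prop} {k : ℕ} {v : V}
  {nom : ℕ → C}

def votableParties (party : C → ℕ) (succ : V → C → C → Prop) (k : ℕ) (v : V) : Set ℕ :=
  {j | j ∈ Icc 1 k ∧ ∃ nom : ℕ → C, ValidNom party k nom ∧ v ∈ votesFor succ k nom j}

theorem eq_of_mem_votesFor (hv : IsStrictTotalOrder C (succ v)) {i j : ℕ} (hi : i ∈ Icc 1 k)
    (hj : j ∈ Icc 1 k) (hvi : v ∈ votesFor succ k nom i) (hvj : v ∈ votesFor succ k nom j) :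
    i = j := by
  by_contra hij
  exact asymm (hvi j hj (Ne.symm hij)) (hvj i hi hij)

theorem exists_mem_votesFor (hk : 1 ≤ k) (hv : IsStrictTotalOrder C (succ v))
    (hnom : ValidNom party k nom) : ∃ j ∈ Icc 1 k, v ∈ votesFor succ k nom j := by
  classical
  let := linearOrderOfSTO (succ v)
  obtain ⟨j, hj, hmin⟩ := (Icc 1 k).exists_min_image nom ⟨1, mem_Icc.2 ⟨le_rfl, hk⟩⟩
  refine ⟨j, hj, fun i hi hij => (hmin i hi).lt_of_ne fun h => hij ?_⟩
  rw [← hnom i hi, ← h, hnom j hj]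

theorem le_add_one_of_mem_votableParties (hv : IsStrictTotalOrder C (succ v))
    (hPASP : PASPVote party (succ v)) {a b : ℕ} (ha : a ∈ votableParties party succ k v)
    (hb : b ∈ votableParties party succ k v) : b ≤ a + 1 := by
  obtain ⟨ha, nomA, hA, hvA⟩ := ha
  obtain ⟨hb, nomB, hB, hvB⟩ := hb
  obtain ⟨lt, hlt, haxis, hsp⟩ := hPASP.exists_axis
  by_contra! hab
  have hm : a + 1 ∈ Icc 1 k := by simp only [mem_Icc] at ha hb ⊢; omega
  exact hsp.not_rel_right_of_rel_left
    (haxis _ _ (by rw [hA a ha, hA _ hm]; omega)) (haxis _ _ (by rw [hA _ hm, hB b hb]; omega))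
    (haxis _ _ (by rw [hA a ha, hB _ hm]; omega)) (haxis _ _ (by rw [hB _ hm, hB b hb]; omega))
    (hvA _ hm (by omega)) (hvB _ hm (by omega))

variable {nom₀ : ℕ → C}

theorem mem_alwaysFor_iff (hv : IsStrictTotalOrder C (succ v))
    (hnom₀ : ValidNom party k nom₀) {i : ℕ} (hi : i ∈ Icc 1 k) :
    v ∈ AlwaysFor party succ k i ↔ votableParties party succ k v = {i} := by
  constructor
  · intro hvi
    refine Set.eq_singleton_iff_unique_mem.2 ⟨⟨hi, nom₀, hnom₀, hvi nom₀ hnom₀⟩, ?_⟩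
    rintro j ⟨hj, nom, hnom, hvj⟩
    exact eq_of_mem_votesFor hv hj hi hvj (hvi nom hnom)
  · intro hS nom hnom
    obtain ⟨j, hj, hvj⟩ := exists_mem_votesFor (nonempty_Icc.1 ⟨i, hi⟩) hv hnom
    have hjS : j ∈ votableParties party succ k v := ⟨hj, nom, hnom, hvj⟩
    rw [hS, Set.mem_singleton_iff] at hjS
    rwa [← hjS]

theorem mem_votableParties_of_not_mem_alwaysFor {i j : ℕ} (hj : j ∈ Icc 1 k)
    (hi : v ∉ AlwaysFor party succ k i)
    (hij : ∀ nom, ValidNom party k nom →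
      v ∈ votesFor succ k nom i ∨ v ∈ votesFor succ k nom j) :
    j ∈ votableParties party succ k v := by
  obtain ⟨nom, hnom, hvi⟩ : ∃ nom, ValidNom party k nom ∧ v ∉ votesFor succ k nom i := by
    by_contra! h
    exact hi h
  exact ⟨hj, nom, hnom, (hij nom hnom).resolve_left hvi⟩

theorem mem_betweenFor_iff (hv : IsStrictTotalOrder C (succ v))
    (hnom₀ : ValidNom party k nom₀) {t : ℕ} (ht : t ∈ Icc 1 (k - 1)) :
    v ∈ BetweenFor party succ k t ↔ votableParties party succ k v = {t, t + 1} := by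
  have ht₁ : t ∈ Icc 1 k := by simp only [mem_Icc] at ht ⊢; omega
  have ht₂ : t + 1 ∈ Icc 1 k := by simp only [mem_Icc] at ht ⊢; omega
  constructor
  · rintro ⟨hnt₁, hnt₂, hall⟩
    refine Set.Subset.antisymm ?_ ?_
    · rintro j ⟨hj, nom, hnom, hvj⟩
      rcases hall nom hnom with h | h
      · exact .inl (eq_of_mem_votesFor hv hj ht₁ hvj h)
      · exact .inr (eq_of_mem_votesFor hv hj ht₂ hvj h)
    · rintro j (rfl | rfl)
      · exact mem_votableParties_of_not_mem_alwaysFor ht₁ hnt₂ fun nom hnom =>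
          (hall nom hnom).symm
      · exact mem_votableParties_of_not_mem_alwaysFor ht₂ hnt₁ hall
  · intro hS
    refine ⟨fun h => ?_, fun h => ?_, fun nom hnom => ?_⟩
    · exact singleton_ne_pair_add_one _ _ (((mem_alwaysFor_iff hv hnom₀ ht₁).1 h).symm.trans hS)
    · exact singleton_ne_pair_add_one _ _ (((mem_alwaysFor_iff hv hnom₀ ht₂).1 h).symm.trans hS)
    · obtain ⟨j, hj, hvj⟩ := exists_mem_votesFor (nonempty_Icc.1 ⟨t, ht₁⟩) hv hnom
      have hjS : j ∈ votableParties party succ k v := ⟨hj, nom, hnom, hvj⟩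
      rw [hS] at hjS
      rcases hjS with rfl | rfl
      · exact .inl hvj
      · exact .inr hvj

theorem votableParties_eq_singleton_or_pair (hk : 1 ≤ k) (hv : IsStrictTotalOrder C (succ v))
    (hPASP : PASPVote party (succ v)) (hnom₀ : ValidNom party k nom₀) :
    (∃ i ∈ Icc 1 k, votableParties party succ k v = {i}) ∨
      ∃ t ∈ Icc 1 (k - 1), votableParties party succ k v = {t, t + 1} := by
  obtain ⟨j, hj, hvj⟩ := exists_mem_votesFor hk hv hnom₀
  have hjS : j ∈ votableParties party succ k v := ⟨hj, nom₀, hnom₀, hvj⟩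
  rcases eq_singleton_or_eq_pair_of_forall_le_add_one ⟨j, hjS⟩
    fun a ha b hb => le_add_one_of_mem_votableParties hv hPASP ha hb with ⟨i, hS⟩ | ⟨t, hS⟩
  · have hi : i ∈ votableParties party succ k v := by rw [hS]; rfl
    exact .inl ⟨i, hi.1, hS⟩
  · have ht : t ∈ votableParties party succ k v := by rw [hS]; exact .inl rfl
    have ht' : t + 1 ∈ votableParties party succ k v := by rw [hS]; exact .inr rfl
    have := ht.1; have := ht'.1
    exact .inr ⟨t, by simp only [mem_Icc] at *; omega, hS⟩

end Voter

theorem voter_partition_general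
    {C V : Type*} {k : ℕ} (hk : 1 ≤ k)
    (party : C → ℕ)
    (hne : ∀ i ∈ Finset.Icc 1 k, ∃ c : C, party c = i)
    (succ : V → C → C → Prop) (hsto : ∀ v : V, IsStrictTotalOrder C (succ v))
    (hPASP : ∀ v : V, PASPVote party (succ v)) :
    (∀ i ∈ Finset.Icc 1 k, ∀ j ∈ Finset.Icc 1 k, i ≠ j →
      AlwaysFor party succ k i ∩ AlwaysFor party succ k j = ∅) ∧
    (∀ i ∈ Finset.Icc 1 k, ∀ j ∈ Finset.Icc 1 (k - 1),
      AlwaysFor party succ k i ∩ BetweenFor party succ k j = ∅) ∧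
    (∀ i ∈ Finset.Icc 1 (k - 1), ∀ j ∈ Finset.Icc 1 (k - 1), i ≠ j →
      BetweenFor party succ k i ∩ BetweenFor party succ k j = ∅) ∧
    (∀ v : V, (∃ i ∈ Finset.Icc 1 k, v ∈ AlwaysFor party succ k i) ∨
      (∃ i ∈ Finset.Icc 1 (k - 1), v ∈ BetweenFor party succ k i)) := by
  obtain ⟨c, -⟩ := hne 1 (mem_Icc.2 ⟨le_rfl, hk⟩)
  have : Nonempty C := ⟨c⟩
  obtain ⟨nom₀, hnom₀⟩ := exists_validNom hne
  have always {v i} (hi : i ∈ Icc 1 k) := mem_alwaysFor_iff (hsto v) hnom₀ hi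
  have between {v t} (ht : t ∈ Icc 1 (k - 1)) := mem_betweenFor_iff (hsto v) hnom₀ ht
  refine ⟨?_, ?_, ?_, fun v => ?_⟩
  · refine fun i hi j hj hij => Set.eq_empty_iff_forall_notMem.2 fun v ⟨hvi, hvj⟩ => hij ?_
    exact Set.singleton_eq_singleton_iff.1 (((always hi).1 hvi).symm.trans ((always hj).1 hvj))
  · refine fun i hi j hj => Set.eq_empty_iff_forall_notMem.2 fun v ⟨hvi, hvj⟩ => ?_
    exact singleton_ne_pair_add_one i j (((always hi).1 hvi).symm.trans ((between hj).1 hvj))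
  · refine fun i hi j hj hij => Set.eq_empty_iff_forall_notMem.2 fun v ⟨hvi, hvj⟩ => hij ?_
    exact eq_of_pair_add_one_eq (((between hi).1 hvi).symm.trans ((between hj).1 hvj))
  · rcases votableParties_eq_singleton_or_pair hk (hsto v) (hPASP v) hnom₀ with
      ⟨i, hi, hS⟩ | ⟨t, ht, hS⟩
    · exact .inl ⟨i, hi, (always hi).2 hS⟩
    · exact .inr ⟨t, ht, (between ht).2 hS⟩

/-- For a party-aligned single-peaked profile, the voter sets `V^{P_i}`
(`AlwaysFor i`, `i ∈ {1,…,k}`) and `V^{(P_i,P_{i+1})}` (`BetweenFor i`,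
`i ∈ {1,…,k-1}`) are pairwise disjoint and their union is the whole voter set. -/
theorem voter_partition
    {C V : Type*} [Fintype C] [Fintype V] {k : ℕ} (hk : 1 ≤ k)
    (party : C → ℕ) (hpr : ∀ c : C, party c ∈ Finset.Icc 1 k)
    (hne : ∀ i ∈ Finset.Icc 1 k, ∃ c : C, party c = i)
    (succ : V → C → C → Prop) (hsto : ∀ v : V, IsStrictTotalOrder C (succ v))
    (hPASP : ∀ v : V, PASPVote party (succ v)) :
    (∀ i ∈ Finset.Icc 1 k, ∀ j ∈ Finset.Icc 1 k, i ≠ j →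
      AlwaysFor party succ k i ∩ AlwaysFor party succ k j = ∅) ∧
    (∀ i ∈ Finset.Icc 1 k, ∀ j ∈ Finset.Icc 1 (k - 1),
      AlwaysFor party succ k i ∩ BetweenFor party succ k j = ∅) ∧
    (∀ i ∈ Finset.Icc 1 (k - 1), ∀ j ∈ Finset.Icc 1 (k - 1), i ≠ j →
      BetweenFor party succ k i ∩ BetweenFor party succ k j = ∅) ∧
    (∀ v : V, (∃ i ∈ Finset.Icc 1 k, v ∈ AlwaysFor party succ k i) ∨
      (∃ i ∈ Finset.Icc 1 (k - 1), v ∈ BetweenFor party succ k i)) :=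
  voter_partition_general hk party hne succ hsto hPASP
end

section
/- Fix a target score s* and parties P_1, P_2 adjacent at the start of the party axis. For a candidate pair (c₁, c₂) ∈ P₁ × P₂, define s₁ = |V^{P₁}| + |{v ∈ V^{(P₁,P₂)} : c₁ ≻_v c₂}| and s₂ = |V^{P₂}| + |{v ∈ V^{(P₁,P₂)} : c₂ ≻_v c₁}|. Then (s₁, s₂) is left-viable for (c₁, c₂) if and only if either s₁ = s*, or s₁ < s* and there is no c₁' ∈ P₁ with |V^{P₁}| + |{v ∈ V^{(P₁,P₂)} : c₁' ≻_v c₂}| ≥ s*. -/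
/-! In every nomination scheme, `V_{≤ 2}` consists of `V^{P₁}`, `V^{P₂}` and `V^{(P₁,P₂)}`,
and a voter of `V^{(P₁,P₂)}` votes for whichever of the nominees `c₁, c₂` it prefers. So the
votes of `c₁` and `c₂` from `V_{≤ 2}` do not depend on the rest of the scheme and are exactly
`s₁` and `s₂`. For `i = 2` feasibility constrains `c₁` alone: (α) says `s₁ ≤ s*`, and (β)
says that if `s₁ < s*` then every `c₁' ∈ P₁` scores below `s*`, its score being given by the
same formula with `c₁'` in place of `c₁`. -/

theorem le_and_forall_ne_lt_iff {α : Type*} {p : α → Prop} {f : α → ℕ} {a : α} {s : ℕ} :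
    (f a ≤ s ∧ (f a < s → ∀ b, p b → b ≠ a → f b < s)) ↔
      (f a = s ∨ (f a < s ∧ ¬ ∃ b, p b ∧ s ≤ f b)) := by
  constructor
  · rintro ⟨hle, hdev⟩
    rcases hle.eq_or_lt with heq | hlt
    · exact .inl heq
    refine .inr ⟨hlt, ?_⟩
    rintro ⟨b, hb, hsb⟩
    rcases eq_or_ne b a with rfl | hba
    · omega
    · exact (hdev hlt b hb hba).not_ge hsb
  · rintro (heq | ⟨hlt, hno⟩)
    · exact ⟨heq.le, fun h => absurd heq h.ne⟩
    · exact ⟨hlt.le, fun _ b hb _ => not_le.1 fun h => hno ⟨b, hb, h⟩⟩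

/-- The paper's `s₁` for `(c₁, c₂)` is `baseScore party succ k 1 c₁ c₂`, and its `s₂` is
`baseScore party succ k 2 c₂ c₁`. -/
noncomputable def baseScore {C V : Type*} (party : C → ℕ) (succ : V → C → C → Prop)
    (k j : ℕ) (a b : C) : ℕ :=
  (AlwaysFor party succ k j).ncard + {v ∈ BetweenFor party succ k 1 | succ v a b}.ncard

section BaseCase

variable {C V : Type*} {party : C → ℕ} {succ : V → C → C → Prop} {k : ℕ}

theorem extends_two_iff {cs nom : ℕ → C} : Extends 2 cs nom ↔ nom 1 = cs 1 ∧ nom 2 = cs 2 := by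
  simp [Extends, show Finset.Icc 1 2 = ({1, 2} : Finset ℕ) by decide]

theorem ValidNom.update {nom : ℕ → C} {j : ℕ} {c : C} (hnom : ValidNom party k nom)
    (hc : party c = j) : ValidNom party k (Function.update nom j c) := by
  intro i hi
  rcases eq_or_ne i j with rfl | hij
  · rwa [Function.update_self]
  · rw [Function.update_of_ne hij]
    exact hnom i hi

theorem exists_validNom_extends (hne : ∀ i ∈ Finset.Icc 1 k, ∃ c : C, party c = i) {i : ℕ}
    {cs : ℕ → C} (hcs : ∀ j ∈ Finset.Icc 1 i, party (cs j) = j) :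
    ∃ nom, ValidNom party k nom ∧ Extends i cs nom := by
  classical
  refine ⟨fun j => if h : i < j ∧ j ∈ Finset.Icc 1 k then (hne j h.2).choose else cs j,
    fun j hj => ?_, fun j hj => dif_neg fun h => (Finset.mem_Icc.1 hj).2.not_gt h.1⟩
  dsimp only
  by_cases hij : i < j
  · rw [dif_pos ⟨hij, hj⟩]
    exact (hne j hj).choose_spec
  · rw [dif_neg fun h => hij h.1]
    exact hcs j (Finset.mem_Icc.2 ⟨(Finset.mem_Icc.1 hj).1, not_lt.1 hij⟩)

theorem disjoint_votesFor (hasymm : ∀ v, Std.Asymm (succ v)) {nom : ℕ → C} {i j : ℕ}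
    (hi : i ∈ Finset.Icc 1 k) (hj : j ∈ Finset.Icc 1 k) (hij : i ≠ j) :
    Disjoint (votesFor succ k nom i) (votesFor succ k nom j) :=
  Set.disjoint_left.2 fun v hvi hvj =>
    (hasymm v).asymm _ _ (hvi j hj hij.symm) (hvj i hi hij)

theorem disjoint_alwaysFor_votesFor (hasymm : ∀ v, Std.Asymm (succ v)) {nom : ℕ → C}
    (hnom : ValidNom party k nom) {i j : ℕ} (hi : i ∈ Finset.Icc 1 k) (hj : j ∈ Finset.Icc 1 k)
    (hij : i ≠ j) : Disjoint (AlwaysFor party succ k i) (votesFor succ k nom j) :=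
  (disjoint_votesFor hasymm hi hj hij).mono_left fun _ hv => hv nom hnom

theorem mem_votesFor_iff_of_mem_betweenFor (hasymm : ∀ v, Std.Asymm (succ v))
    {nom : ℕ → C} (hnom : ValidNom party k nom) {i : ℕ} (hi : 1 ≤ i) (hik : i + 1 ≤ k)
    {v : V} (hv : v ∈ BetweenFor party succ k i) :
    (v ∈ votesFor succ k nom i ↔ succ v (nom i) (nom (i + 1))) ∧
      (v ∈ votesFor succ k nom (i + 1) ↔ succ v (nom (i + 1)) (nom i)) := by
  have hi' : i ∈ Finset.Icc 1 k := Finset.mem_Icc.2 ⟨hi, by omega⟩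
  have hi1 : i + 1 ∈ Finset.Icc 1 k := Finset.mem_Icc.2 ⟨by omega, hik⟩
  have hvote := hv.2.2 nom hnom
  refine ⟨⟨fun h => h _ hi1 (by omega), fun h => hvote.resolve_right fun h' => ?_⟩,
    ⟨fun h => h _ hi' (by omega), fun h => hvote.resolve_left fun h' => ?_⟩⟩
  · exact (hasymm v).asymm _ _ h (h' i hi' (by omega))
  · exact (hasymm v).asymm _ _ h (h' (i + 1) hi1 (by omega))

theorem Vle_two :
    Vle party succ k 2 =
      AlwaysFor party succ k 1 ∪ AlwaysFor party succ k 2 ∪ BetweenFor party succ k 1 := by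
  simp [Vle, show Finset.Icc 1 2 = ({1, 2} : Finset ℕ) by decide]

theorem votesFrom_Vle_two_one [Finite V] (hasymm : ∀ v, Std.Asymm (succ v)) (hk : 2 ≤ k)
    {nom : ℕ → C} (hnom : ValidNom party k nom) :
    votesFrom (Vle party succ k 2) succ k nom 1 = baseScore party succ k 1 (nom 1) (nom 2) := by
  have h1 : 1 ∈ Finset.Icc 1 k := Finset.mem_Icc.2 ⟨le_rfl, by omega⟩
  have h2 : 2 ∈ Finset.Icc 1 k := Finset.mem_Icc.2 ⟨by omega, hk⟩
  have hset : Vle party succ k 2 ∩ votesFor succ k nom 1 =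
      AlwaysFor party succ k 1 ∪ {v ∈ BetweenFor party succ k 1 | succ v (nom 1) (nom 2)} := by
    ext v
    have hA1 : v ∈ AlwaysFor party succ k 1 → v ∈ votesFor succ k nom 1 := fun hv => hv nom hnom
    have hA2 : v ∈ AlwaysFor party succ k 2 → v ∉ votesFor succ k nom 1 :=
      fun hv => Set.disjoint_left.1 (disjoint_alwaysFor_votesFor hasymm hnom h2 h1 (by omega)) hv
    have hB := fun hv : v ∈ BetweenFor party succ k 1 =>
      (mem_votesFor_iff_of_mem_betweenFor hasymm hnom le_rfl hk hv).1
    simp only [Vle_two, Set.mem_inter_iff, Set.mem_union, Set.mem_ofPred_eq]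
    tauto
  rw [votesFrom, hset, Set.ncard_union_eq (Set.disjoint_left.2 fun _ h1 h2 => h2.1.1 h1),
    baseScore]

theorem votesFrom_Vle_two_two [Finite V] (hasymm : ∀ v, Std.Asymm (succ v)) (hk : 2 ≤ k)
    {nom : ℕ → C} (hnom : ValidNom party k nom) :
    votesFrom (Vle party succ k 2) succ k nom 2 = baseScore party succ k 2 (nom 2) (nom 1) := by
  have h1 : 1 ∈ Finset.Icc 1 k := Finset.mem_Icc.2 ⟨le_rfl, by omega⟩
  have h2 : 2 ∈ Finset.Icc 1 k := Finset.mem_Icc.2 ⟨by omega, hk⟩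
  have hset : Vle party succ k 2 ∩ votesFor succ k nom 2 =
      AlwaysFor party succ k 2 ∪ {v ∈ BetweenFor party succ k 1 | succ v (nom 2) (nom 1)} := by
    ext v
    have hA1 : v ∈ AlwaysFor party succ k 1 → v ∉ votesFor succ k nom 2 :=
      fun hv => Set.disjoint_left.1 (disjoint_alwaysFor_votesFor hasymm hnom h1 h2 (by omega)) hv
    have hA2 : v ∈ AlwaysFor party succ k 2 → v ∈ votesFor succ k nom 2 := fun hv => hv nom hnom
    have hB := fun hv : v ∈ BetweenFor party succ k 1 =>
      (mem_votesFor_iff_of_mem_betweenFor hasymm hnom le_rfl hk hv).2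
    simp only [Vle_two, Set.mem_inter_iff, Set.mem_union, Set.mem_ofPred_eq]
    tauto
  rw [votesFrom, hset, Set.ncard_union_eq (Set.disjoint_left.2 fun _ h1 h2 => h2.1.2.1 h1),
    baseScore]

theorem exists_validNom_one_two (hne : ∀ i ∈ Finset.Icc 1 k, ∃ c : C, party c = i) {c1 c2 : C}
    (hc1 : party c1 = 1) (hc2 : party c2 = 2) :
    ∃ nom, ValidNom party k nom ∧ nom 1 = c1 ∧ nom 2 = c2 := by
  obtain ⟨nom, hnom, hext⟩ :=
    exists_validNom_extends hne (i := 2) (cs := fun j => if j = 1 then c1 else c2) fun j hj => by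
      obtain rfl | rfl : j = 1 ∨ j = 2 := by simp only [Finset.mem_Icc] at hj; omega
      exacts [hc1, hc2]
  exact ⟨nom, hnom, extends_two_iff.1 hext⟩

theorem leftFeasible_two_iff [Finite V] (hasymm : ∀ v, Std.Asymm (succ v)) (hk : 2 ≤ k)
    (hne : ∀ i ∈ Finset.Icc 1 k, ∃ c : C, party c = i) {sstar : ℕ} {cs : ℕ → C} :
    LeftFeasible party succ k sstar 2 cs ↔
      party (cs 1) = 1 ∧ party (cs 2) = 2 ∧
        baseScore party succ k 1 (cs 1) (cs 2) ≤ sstar ∧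
        (baseScore party succ k 1 (cs 1) (cs 2) < sstar → ∀ c', party c' = 1 → c' ≠ cs 1 →
          baseScore party succ k 1 c' (cs 2) < sstar) := by
  have hparty : (∀ j ∈ Finset.Icc 1 2, party (cs j) = j) ↔
      party (cs 1) = 1 ∧ party (cs 2) = 2 := by
    simp [show Finset.Icc 1 2 = ({1, 2} : Finset ℕ) by decide]
  have hscore : ∀ nom, ValidNom party k nom → Extends 2 cs nom →
      votesFrom (Vle party succ k 2) succ k nom 1 = baseScore party succ k 1 (cs 1) (cs 2) := by
    intro nom hnom hext
    obtain ⟨h1, h2⟩ := extends_two_iff.1 hext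
    rw [votesFrom_Vle_two_one hasymm hk hnom, h1, h2]
  have hdev : ∀ nom, ValidNom party k nom → Extends 2 cs nom → ∀ c', party c' = 1 →
      votesFrom (Vle party succ k 2) succ k (Function.update nom 1 c') 1 =
        baseScore party succ k 1 c' (cs 2) := by
    intro nom hnom hext c' hc'
    rw [votesFrom_Vle_two_one hasymm hk (hnom.update hc'), Function.update_self,
      Function.update_of_ne (by decide), (extends_two_iff.1 hext).2]
  simp only [LeftFeasible, hparty, show Finset.Icc 1 (2 - 1) = {1} by decide,
    Finset.mem_singleton, forall_eq]
  constructor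
  · rintro ⟨hcs, hfeas⟩
    obtain ⟨nom, hnom, hext⟩ := exists_validNom_extends hne (hparty.2 hcs)
    obtain ⟨hle, hlt⟩ := hfeas nom hnom hext
    rw [hscore nom hnom hext] at hle hlt
    exact ⟨hcs.1, hcs.2, hle, fun h c' hc' hne' => hdev nom hnom hext c' hc' ▸ hlt h c' hc' hne'⟩
  · rintro ⟨hc1, hc2, hle, hlt⟩
    refine ⟨⟨hc1, hc2⟩, fun nom hnom hext => ?_⟩
    rw [hscore nom hnom hext]
    exact ⟨hle, fun h c' hc' hne' => (hdev nom hnom hext c' hc').symm ▸ hlt h c' hc' hne'⟩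

theorem leftViablePair_two_iff [Finite V] (hasymm : ∀ v, Std.Asymm (succ v)) (hk : 2 ≤ k)
    (hne : ∀ i ∈ Finset.Icc 1 k, ∃ c : C, party c = i) {sstar s1 s2 : ℕ} {c1 c2 : C}
    (hc1 : party c1 = 1) (hc2 : party c2 = 2) :
    LeftViablePair party succ k sstar 2 c1 c2 s1 s2 ↔
      s1 = baseScore party succ k 1 c1 c2 ∧ s2 = baseScore party succ k 2 c2 c1 ∧
        baseScore party succ k 1 c1 c2 ≤ sstar ∧
        (baseScore party succ k 1 c1 c2 < sstar → ∀ c', party c' = 1 → c' ≠ c1 →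
          baseScore party succ k 1 c' c2 < sstar) := by
  have hscores : ∀ nom, ValidNom party k nom → nom 1 = c1 → nom 2 = c2 →
      votesFrom (Vle party succ k 2) succ k nom 1 = baseScore party succ k 1 c1 c2 ∧
        votesFrom (Vle party succ k 2) succ k nom 2 = baseScore party succ k 2 c2 c1 := by
    rintro nom hnom rfl rfl
    exact ⟨votesFrom_Vle_two_one hasymm hk hnom, votesFrom_Vle_two_two hasymm hk hnom⟩
  constructor
  · rintro ⟨cs, hfeas, hcs1, hcs2, hs⟩
    obtain ⟨nom, hnom, hext⟩ := exists_validNom_extends hne hfeas.1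
    obtain ⟨hn1, hn2⟩ := extends_two_iff.1 hext
    obtain ⟨hs1, hs2⟩ := hs nom hnom hext
    obtain ⟨hv1, hv2⟩ := hscores nom hnom (hn1.trans hcs1) (hn2.trans hcs2)
    obtain ⟨-, -, hcond⟩ := (leftFeasible_two_iff hasymm hk hne).1 hfeas
    rw [← hs1, ← hs2, hv1, hv2]
    exact ⟨rfl, rfl, hcs1 ▸ hcs2 ▸ hcond⟩
  · rintro ⟨rfl, rfl, hcond⟩
    obtain ⟨cs, -, h1, h2⟩ := exists_validNom_one_two hne hc1 hc2
    refine ⟨cs, (leftFeasible_two_iff hasymm hk hne).2 (by rw [h1, h2]; exact ⟨hc1, hc2, hcond⟩),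
      h1, h2, fun nom hnom hext => ?_⟩
    obtain ⟨hn1, hn2⟩ := extends_two_iff.1 hext
    exact hscores nom hnom (hn1.trans h1) (hn2.trans h2)

end BaseCase

theorem viable_scorepair_base_general
    {C V : Type*} [Fintype V] {k : ℕ} (hk : 2 ≤ k)
    (party : C → ℕ)
    (hne : ∀ i ∈ Finset.Icc 1 k, ∃ c : C, party c = i)
    (succ : V → C → C → Prop) (hsto : ∀ v : V, IsStrictTotalOrder C (succ v))
    (sstar : ℕ) (c1 c2 : C) (hc1 : party c1 = 1) (hc2 : party c2 = 2)
    (s1 s2 : ℕ)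
    (hs1 : s1 = (AlwaysFor party succ k 1).ncard +
      {v ∈ BetweenFor party succ k 1 | succ v c1 c2}.ncard)
    (hs2 : s2 = (AlwaysFor party succ k 2).ncard +
      {v ∈ BetweenFor party succ k 1 | succ v c2 c1}.ncard) :
    LeftViablePair party succ k sstar 2 c1 c2 s1 s2 ↔
      (s1 = sstar ∨ (s1 < sstar ∧ ¬ ∃ c' : C, party c' = 1 ∧
        sstar ≤ (AlwaysFor party succ k 1).ncard +
          {v ∈ BetweenFor party succ k 1 | succ v c' c2}.ncard)) := by
  have hasymm : ∀ v, Std.Asymm (succ v) := fun v => haveI := hsto v; inferInstance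
  subst hs1 hs2
  exact (leftViablePair_two_iff hasymm hk hne hc1 hc2).trans <|
    (and_iff_right rfl).trans <| (and_iff_right rfl).trans
      (le_and_forall_ne_lt_iff (f := fun c => baseScore party succ k 1 c c2))

/-- Base case of the dynamic programme: for a candidate pair
`(c₁, c₂) ∈ P₁ × P₂`, the score pair `(s₁, s₂)` determined by the formulas
`s₁ = |V^{P₁}| + |{v ∈ V^{(P₁,P₂)} : c₁ ≻_v c₂}|` and
`s₂ = |V^{P₂}| + |{v ∈ V^{(P₁,P₂)} : c₂ ≻_v c₁}|` is left-viable for `(c₁, c₂)`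
iff `s₁ = s*`, or `s₁ < s*` and no `c₁' ∈ P₁` reaches at least `s*` votes. -/
theorem viable_scorepair_base
    {C V : Type*} [Fintype C] [Fintype V] {k : ℕ} (hk : 2 ≤ k)
    (party : C → ℕ) (hpr : ∀ c : C, party c ∈ Finset.Icc 1 k)
    (hne : ∀ i ∈ Finset.Icc 1 k, ∃ c : C, party c = i)
    (succ : V → C → C → Prop) (hsto : ∀ v : V, IsStrictTotalOrder C (succ v))
    (hPASP : ∀ v : V, PASPVote party (succ v))
    (sstar : ℕ) (c1 c2 : C) (hc1 : party c1 = 1) (hc2 : party c2 = 2)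
    (s1 s2 : ℕ)
    (hs1 : s1 = (AlwaysFor party succ k 1).ncard +
      {v ∈ BetweenFor party succ k 1 | succ v c1 c2}.ncard)
    (hs2 : s2 = (AlwaysFor party succ k 2).ncard +
      {v ∈ BetweenFor party succ k 1 | succ v c2 c1}.ncard) :
    LeftViablePair party succ k sstar 2 c1 c2 s1 s2 ↔
      (s1 = sstar ∨ (s1 < sstar ∧ ¬ ∃ c' : C, party c' = 1 ∧
        sstar ≤ (AlwaysFor party succ k 1).ncard +
          {v ∈ BetweenFor party succ k 1 | succ v c' c2}.ncard)) :=
  viable_scorepair_base_general hk party hne succ hsto sstar c1 c2 hc1 hc2 s1 s2 hs1 hs2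
end
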